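/- arXiv:2108.04705 — 15 statements merged into one kernel-verified Lean document; each statement's English description precedes it below -/
import Mathlib

section
/- For any finite index set N, any family of values β : Set N → [0,1] that is monotone with respect to inclusion (S ⊆ S' implies β S ≤ β S'), the voting rule g(r) = max over S ⊆ N of min(β S, min over i ∈ S of r_i) is uncompromising: for every voter i and profiles r, r' differing only in coordinate i, if r_i < g(r) then g(r) ≤ g(r'), and if r_i > g(r) then g(r) ≥ g(r'). -/
open Set Finset

/-- Moulin's max-min voting rule with inclusion-monotone coalition phantoms `β` is
uncompromising: no voter can pull the outcome towards their own peak by misreporting. -/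
theorem maxmin_rule_uncompromising
    (n : ℕ) (β : Finset (Fin n) → ℝ)
    (hβ : ∀ S, β S ∈ Icc (0:ℝ) 1)
    (hmono : ∀ S S' : Finset (Fin n), S ⊆ S' → β S ≤ β S')
    (g : (Fin n → ℝ) → ℝ)
    (hg : ∀ r : Fin n → ℝ,
      g r = (Finset.univ : Finset (Fin n)).powerset.fold max 0
              (fun S => min (β S) (S.fold min 1 r))) :
    ∀ (i : Fin n) (r r' : Fin n → ℝ),
      (∀ j, r j ∈ Icc (0:ℝ) 1) → (∀ j, r' j ∈ Icc (0:ℝ) 1) →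
      (∀ j, j ≠ i → r' j = r j) →
      (r i < g r → g r ≤ g r') ∧ (r i > g r → g r ≥ g r') := by
  intro i r r' hr hr' hdiff
  -- abbreviation
  have hcongr : ∀ S : Finset (Fin n), i ∉ S → S.fold min 1 r' = S.fold min 1 r :=
    fun S hiS => Finset.fold_congr (fun j hj => hdiff j (by rintro rfl; exact hiS hj))
  have hle : ∀ (v : Fin n → ℝ) (S : Finset (Fin n)),
      min (β S) (S.fold min 1 v) ≤ g v := by
    intro v S
    rw [hg]
    exact (Finset.le_fold_max _).mpr
      (Or.inr ⟨S, Finset.mem_powerset.mpr (Finset.subset_univ S), le_rfl⟩)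
  have hg0 : ∀ v : Fin n → ℝ, 0 ≤ g v := by
    intro v; rw [hg]; exact (Finset.le_fold_max _).mpr (Or.inl le_rfl)
  constructor
  · -- r i < g r
    intro h
    have hpos : 0 < g r := lt_of_le_of_lt (hr i).1 h
    have hmax : ∃ S ∈ (Finset.univ : Finset (Fin n)).powerset,
        g r ≤ min (β S) (S.fold min 1 r) := by
      have := (Finset.le_fold_max _).mp (le_of_eq (hg r))
      rcases this with h0 | h1
      · exact absurd h0 (not_le.mpr hpos)
      · exact h1
    obtain ⟨S, -, hS⟩ := hmax
    have hiS : i ∉ S := by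
      intro hi
      have : S.fold min 1 r ≤ r i := (Finset.fold_min_le _).mpr (Or.inr ⟨i, hi, le_rfl⟩)
      have : min (β S) (S.fold min 1 r) ≤ r i := le_trans (min_le_right _ _) this
      exact absurd (lt_of_le_of_lt (le_trans hS this) h) (lt_irrefl _)
    calc g r ≤ min (β S) (S.fold min 1 r) := hS
      _ = min (β S) (S.fold min 1 r') := by rw [hcongr S hiS]
      _ ≤ g r' := hle r' S
  · -- r i > g r
    intro h
    rw [hg r']
    refine (Finset.fold_max_le _).mpr ⟨hg0 r, fun S _ => ?_⟩
    by_cases hiS : i ∈ S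
    · set T := S.erase i with hT
      have hiT : i ∉ T := Finset.notMem_erase _ _
      have hins : insert i T = S := Finset.insert_erase hiS
      have hfold' : S.fold min 1 r' = min (r' i) (T.fold min 1 r') := by
        rw [← hins, Finset.fold_insert hiT]
      have hfold : S.fold min 1 r = min (r i) (T.fold min 1 r) := by
        rw [← hins, Finset.fold_insert hiT]
      have hTcong : T.fold min 1 r' = T.fold min 1 r := hcongr T hiT
      set m := T.fold min 1 r with hm
      have h1 : min (β S) (min (r i) m) ≤ g r := by
        rw [← hfold]; exact hle r S
      have h2 : min (β S) m ≤ g r := by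
        by_contra hc
        push_neg at hc
        have hβ' : g r < β S := lt_of_lt_of_le hc (min_le_left _ _)
        have hm' : g r < m := lt_of_lt_of_le hc (min_le_right _ _)
        exact absurd h1 (not_le.mpr (lt_min hβ' (lt_min h hm')))
      calc min (β S) (S.fold min 1 r')
          = min (β S) (min (r' i) m) := by rw [hfold', hTcong]
        _ ≤ min (β S) m := min_le_min le_rfl (min_le_right _ _)
        _ ≤ g r := h2
    · rw [hcongr S hiS]; exact hle r S
end

section
/- For real numbers r_1,…,r_n ∈ [0,1] and phantoms 0 = α_0 ≤ α_1 ≤ … ≤ α_n = 1, the median of the multiset {r_1,…,r_n, α_0,…,α_n} (a multiset of size 2n+1) equals max over S ⊆ {1,…,n} of min(α_{|S|}, min over i ∈ S of r_i), where min over i ∈ ∅ is 1. -/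
open Set Finset

/-- Equivalence of Moulin's median formula (with phantoms `α 0 ≤ … ≤ α n`,
`α 0 = 0`, `α n = 1`) and the max-min formula with coalition phantoms `β S = α |S|`:
the `(n+1)`-st smallest element of the multiset `{r 1,…,r n, α 0,…,α n}` (of size
`2n+1`) equals `max_{S ⊆ N} min (α |S|, min_{i ∈ S} r i)`. -/
theorem median_eq_maxmin
    (n : ℕ) (r : Fin n → ℝ) (α : ℕ → ℝ)
    (hr : ∀ i, r i ∈ Icc (0:ℝ) 1)
    (hα0 : α 0 = 0) (hαn : α n = 1)
    (hαmono : ∀ j k, j ≤ k → k ≤ n → α j ≤ α k) :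
    ((((Finset.univ : Finset (Fin n)).val.map r
        + (Multiset.range (n+1)).map (fun k => α k)).sort (· ≤ ·))[n]!
      = (Finset.univ : Finset (Fin n)).powerset.fold max 0
          (fun S => min (α S.card) (S.fold min 1 r))) := by
  classical
  set M : Multiset ℝ := (Finset.univ : Finset (Fin n)).val.map r
      + (Multiset.range (n+1)).map (fun k => α k) with hM
  set L : List ℝ := M.sort (· ≤ ·) with hLdef
  have hcard : Multiset.card M = 2*n+1 := by
    simp [hM]; ring
  have hlen : L.length = 2*n+1 := by rw [hLdef, Multiset.length_sort, hcard]
  have hn : n < L.length := by omega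
  rw [getElem!_pos L n hn]
  set m := L[n] with hmdef
  have hsorted : L.Pairwise (· ≤ ·) := Multiset.pairwise_sort _ _
  have hLM : (L : Multiset ℝ) = M := Multiset.sort_eq _ _
  -- membership bounds
  have hmemM : ∀ x ∈ M, 0 ≤ x ∧ x ≤ 1 := by
    intro x hx
    rw [hM] at hx
    rcases Multiset.mem_add.mp hx with h | h
    · obtain ⟨i, _, rfl⟩ := Multiset.mem_map.mp h
      exact ⟨(hr i).1, (hr i).2⟩
    · obtain ⟨k, hk, rfl⟩ := Multiset.mem_map.mp h
      rw [Multiset.mem_range] at hk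
      constructor
      · rw [← hα0]; exact hαmono 0 k (Nat.zero_le _) (by omega)
      · rw [← hαn]; exact hαmono k n (by omega) le_rfl
  have hmem_m : m ∈ M := by
    have : m ∈ L := List.getElem_mem hn
    rwa [← hLM]
    -- `m ∈ ↑L` is defeq to `m ∈ L`
  have hm0 : 0 ≤ m := (hmemM m hmem_m).1
  have hm1 : m ≤ 1 := (hmemM m hmem_m).2
  -- counting via sorted list
  have hcnt : ∀ (p : ℝ → Prop) [DecidablePred p],
      M.countP p = L.countP (fun x => decide (p x)) := by
    intro p _
    rw [← hLM, Multiset.coe_countP]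
  -- at least n+1 elements ≤ m
  have hA : n + 1 ≤ M.countP (fun x => x ≤ m) := by
    rw [hcnt]
    have hsplit : L.countP (fun x => decide (x ≤ m))
        = (L.take (n+1)).countP (fun x => decide (x ≤ m))
          + (L.drop (n+1)).countP (fun x => decide (x ≤ m)) := by
      conv_lhs => rw [← List.take_append_drop (n+1) L]
      rw [List.countP_append]
    have htake : (L.take (n+1)).countP (fun x => decide (x ≤ m)) = n + 1 := by
      have hlen' : (L.take (n+1)).length = n + 1 := by
        rw [List.length_take]; omega
      have h' : (L.take (n+1)).countP (fun x => decide (x ≤ m))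
          = (L.take (n+1)).length := List.countP_eq_length.mpr (by
      intro a ha
      obtain ⟨i, hi, rfl⟩ := List.mem_iff_getElem.mp ha
      simp only [List.getElem_take]
      have hin : i ≤ n := by
        rw [List.length_take] at hi; omega
      have hi' : i < L.length := by omega
      have := hsorted.rel_get_of_le (a := ⟨i, hi'⟩) (b := ⟨n, hn⟩) hin
      simpa [List.get_eq_getElem] using this)
      omega
    omega
  -- at least n+1 elements ≥ m
  have hB : n + 1 ≤ M.countP (fun x => m ≤ x) := by
    rw [hcnt]
    have hsplit : L.countP (fun x => decide (m ≤ x))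
        = (L.take n).countP (fun x => decide (m ≤ x))
          + (L.drop n).countP (fun x => decide (m ≤ x)) := by
      conv_lhs => rw [← List.take_append_drop n L]
      rw [List.countP_append]
    have hdrop : (L.drop n).countP (fun x => decide (m ≤ x)) = n + 1 := by
      have hlen' : (L.drop n).length = n + 1 := by
        rw [List.length_drop]; omega
      have h' : (L.drop n).countP (fun x => decide (m ≤ x))
          = (L.drop n).length := List.countP_eq_length.mpr (by
      intro a ha
      obtain ⟨i, hi, rfl⟩ := List.mem_iff_getElem.mp ha
      simp only [List.getElem_drop]
      have hi' : n + i < L.length := by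
        rw [List.length_drop] at hi; omega
      have := hsorted.rel_get_of_le (a := ⟨n, hn⟩) (b := ⟨n + i, hi'⟩)
        (by simp)
      simpa [List.get_eq_getElem] using this)
      omega
    omega
  -- at most n elements > m
  have hC : M.countP (fun x => m < x) ≤ n := by
    have hcompl := Multiset.card_eq_countP_add_countP (fun x : ℝ => x ≤ m) M
    have heq : M.countP (fun x => ¬ x ≤ m) = M.countP (fun x => m < x) :=
      Multiset.countP_congr rfl (fun x _ => by simp [not_le])
    omega
  -- count on the r-part equals a filter card
  have hcntr : ∀ (p : ℝ → Prop) [DecidablePred p],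
      ((Finset.univ : Finset (Fin n)).val.map r).countP p
        = ((Finset.univ : Finset (Fin n)).filter (fun i => p (r i))).card := by
    intro p _
    rw [Multiset.countP_map]
    rfl
  have hcntα : ∀ (p : ℝ → Prop) [DecidablePred p],
      ((Multiset.range (n+1)).map (fun k => α k)).countP p
        = ((Finset.range (n+1)).filter (fun k => p (α k))).card := by
    intro p _
    rw [Multiset.countP_map]
    rw [← Finset.range_val]
    rfl
  refine le_antisymm ?_ ?_
  · -- m ≤ max-min
    set S : Finset (Fin n) := Finset.univ.filter (fun i => m ≤ r i) with hS
    have hsn : S.card ≤ n := by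
      calc S.card ≤ (Finset.univ : Finset (Fin n)).card := Finset.card_filter_le _ _
      _ = n := by simp
    have hrcount : ((Finset.univ : Finset (Fin n)).val.map r).countP (fun x => m ≤ x)
        = S.card := hcntr _
    have hαs : m ≤ α S.card := by
      by_contra hcon
      push_neg at hcon
      have hsub : (Finset.range (n+1)).filter (fun k => m ≤ α k)
          ⊆ Finset.Ico (S.card + 1) (n+1) := by
        intro k hk
        rw [Finset.mem_filter, Finset.mem_range] at hk
        rw [Finset.mem_Ico]
        refine ⟨?_, hk.1⟩
        by_contra hks
        push_neg at hks
        have : α k ≤ α S.card := hαmono k S.card (by omega) hsn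
        linarith [hk.2]
      have hcard' : ((Finset.range (n+1)).filter (fun k => m ≤ α k)).card
          ≤ n - S.card := by
        calc ((Finset.range (n+1)).filter (fun k => m ≤ α k)).card
            ≤ (Finset.Ico (S.card + 1) (n+1)).card := Finset.card_le_card hsub
        _ = n - S.card := by rw [Nat.card_Ico]; omega
      have htot := hB
      rw [hM, Multiset.countP_add, hrcount, hcntα] at htot
      omega
    have hfold : m ≤ S.fold min 1 r := by
      rw [Finset.le_fold_min]
      exact ⟨hm1, fun i hi => (Finset.mem_filter.mp hi).2⟩
    rw [Finset.le_fold_max]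
    exact Or.inr ⟨S, Finset.mem_powerset.mpr (Finset.subset_univ _),
      le_min hαs hfold⟩
  · -- max-min ≤ m
    rw [Finset.fold_max_le]
    refine ⟨hm0, fun S _ => ?_⟩
    by_contra hcon
    push_neg at hcon
    rw [lt_min_iff] at hcon
    obtain ⟨hα_gt, hfold_gt⟩ := hcon
    have hsn : S.card ≤ n := by
      calc S.card ≤ (Finset.univ : Finset (Fin n)).card := Finset.card_le_card (Finset.subset_univ _)
      _ = n := by simp
    have hri : ∀ i ∈ S, m < r i := by
      intro i hi
      have : S.fold min 1 r ≤ r i := by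
        rw [Finset.fold_min_le]
        exact Or.inr ⟨i, hi, le_rfl⟩
      linarith
    have hr_count : S.card ≤ ((Finset.univ : Finset (Fin n)).val.map r).countP (fun x => m < x) := by
      rw [hcntr]
      apply Finset.card_le_card
      intro i hi
      rw [Finset.mem_filter]
      exact ⟨Finset.mem_univ i, hri i hi⟩
    have hα_count : n + 1 - S.card ≤ ((Multiset.range (n+1)).map (fun k => α k)).countP (fun x => m < x) := by
      rw [hcntα]
      calc n + 1 - S.card = (Finset.Ico S.card (n+1)).card := by rw [Nat.card_Ico]
      _ ≤ _ := by
          apply Finset.card_le_card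
          intro k hk
          rw [Finset.mem_Ico] at hk
          rw [Finset.mem_filter, Finset.mem_range]
          refine ⟨hk.2, lt_of_lt_of_le hα_gt (hαmono S.card k hk.1 (by omega))⟩
    have htot := hC
    rw [hM, Multiset.countP_add] at htot
    omega
end

section
/- The median voting rule with phantoms: g(r) = median(r_1,…,r_n, α_0,…,α_n) with 0 ≤ α_0 ≤ … ≤ α_n ≤ 1 is anonymous (invariant under permutations of r_1,…,r_n) and uncompromising. Moreover g is unanimous (g(x,…,x) = x for all x ∈ [0,1]) if and only if α_0 = 0 and α_n = 1. -/
open Set Finset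

lemma sorted_countP_iff (p : ℝ → Bool) (hp : ∀ a b : ℝ, a ≤ b → p b = true → p a = true) :
    ∀ (l : List ℝ), l.Pairwise (· ≤ ·) → ∀ k, (hk : k < l.length) →
      (p l[k] = true ↔ k < l.countP p) := by
  intro l
  induction l with
  | nil => intro _ k hk; simp at hk
  | cons a t ih =>
    intro hs k hk
    rw [List.pairwise_cons] at hs
    rw [List.countP_cons]
    cases k with
    | zero =>
      simp only [List.getElem_cons_zero]
      constructor
      · intro h; simp [h]
      · intro h
        by_contra hpa
        have h0 : t.countP p = 0 := by
          rw [List.countP_eq_zero]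
          intro b hb
          intro hpb
          exact hpa (hp a b (hs.1 b hb) hpb)
        simp [hpa, h0] at h
    | succ k =>
      simp only [List.getElem_cons_succ]
      have hk' : k < t.length := by simpa using hk
      have IH := ih hs.2 k hk'
      constructor
      · intro h
        have hmem : t[k] ∈ t := List.getElem_mem hk'
        have hpa : p a = true := hp a t[k] (hs.1 _ hmem) h
        have := IH.1 h
        simp [hpa]; omega
      · intro h
        apply IH.2
        have : (if p a then 1 else 0) ≤ 1 := by split <;> simp
        omega

lemma med_le_iff (n : ℕ) (s : Multiset ℝ) (hcard : Multiset.card s = 2*n+1) (x : ℝ) :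
    ((s.sort (· ≤ ·))[n]!) ≤ x ↔ n+1 ≤ s.countP (· ≤ x) := by
  set l := s.sort (· ≤ ·) with hl
  have hlen : l.length = 2*n+1 := by rw [hl, Multiset.length_sort, hcard]
  have hn : n < l.length := by omega
  have hcnt : s.countP (· ≤ x) = l.countP (fun a => decide (a ≤ x)) := by
    conv_lhs => rw [← Multiset.sort_eq s (· ≤ ·)]
    rfl
  rw [getElem!_pos l n hn, hcnt]
  have := sorted_countP_iff (fun a => decide (a ≤ x))
    (by intro a b hab h; simp at h ⊢; linarith) l (s.pairwise_sort _) n hn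
  simp only [decide_eq_true_eq] at this
  rw [this]; omega

lemma le_med_iff (n : ℕ) (s : Multiset ℝ) (hcard : Multiset.card s = 2*n+1) (x : ℝ) :
    x ≤ ((s.sort (· ≤ ·))[n]!) ↔ s.countP (· < x) ≤ n := by
  set l := s.sort (· ≤ ·) with hl
  have hlen : l.length = 2*n+1 := by rw [hl, Multiset.length_sort, hcard]
  have hn : n < l.length := by omega
  have hcnt : s.countP (· < x) = l.countP (fun a => decide (a < x)) := by
    conv_lhs => rw [← Multiset.sort_eq s (· ≤ ·)]
    rfl
  rw [getElem!_pos l n hn, hcnt]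
  have := sorted_countP_iff (fun a => decide (a < x))
    (by intro a b hab h; simp at h ⊢; linarith) l (s.pairwise_sort _) n hn
  simp only [decide_eq_true_eq] at this
  rw [← not_lt, this, not_lt]

/-- The median voting rule with phantoms `0 ≤ α 0 ≤ … ≤ α n ≤ 1` is anonymous and
uncompromising; moreover it is unanimous iff `α 0 = 0` and `α n = 1`. -/
theorem median_rule_anonymous_uncompromising_unanimous
    (n : ℕ) (hn : 0 < n) (α : ℕ → ℝ)
    (hα : ∀ k, k ≤ n → α k ∈ Icc (0:ℝ) 1)
    (hαmono : ∀ j k, j ≤ k → k ≤ n → α j ≤ α k)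
    (g : (Fin n → ℝ) → ℝ)
    (hg : ∀ r : Fin n → ℝ,
      g r = ((((Finset.univ : Finset (Fin n)).val.map r
        + (Multiset.range (n+1)).map (fun k => α k)).sort (· ≤ ·))[n]!)) :
    -- anonymity
    (∀ (σ : Equiv.Perm (Fin n)) (r : Fin n → ℝ), g (r ∘ σ) = g r) ∧
    -- uncompromisingness
    (∀ (i : Fin n) (r r' : Fin n → ℝ),
      (∀ j, r j ∈ Icc (0:ℝ) 1) → (∀ j, r' j ∈ Icc (0:ℝ) 1) →
      (∀ j, j ≠ i → r' j = r j) →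
      (r i < g r → g r ≤ g r') ∧ (r i > g r → g r ≥ g r')) ∧
    -- unanimity iff the extreme phantoms are 0 and 1
    ((∀ x ∈ Icc (0:ℝ) 1, g (fun _ => x) = x) ↔ (α 0 = 0 ∧ α n = 1)) := by
  set P : Multiset ℝ := (Multiset.range (n+1)).map (fun k => α k) with hP
  have hPcard : Multiset.card P = n + 1 := by simp [hP]
  have hScard : ∀ r : Fin n → ℝ,
      Multiset.card ((Finset.univ : Finset (Fin n)).val.map r + P) = 2*n+1 := by
    intro r
    simp only [Multiset.card_add, Multiset.card_map, hPcard]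
    simp [Finset.card_univ]
    omega
  have hPmem : ∀ a ∈ P, ∃ k, k ≤ n ∧ a = α k := by
    intro a ha
    rw [hP, Multiset.mem_map] at ha
    obtain ⟨k, hk, hka⟩ := ha
    rw [Multiset.mem_range] at hk
    exact ⟨k, by omega, hka.symm⟩
  have hα0P : α 0 ∈ P := by
    rw [hP, Multiset.mem_map]
    exact ⟨0, by simp [Multiset.mem_range]; omega, rfl⟩
  have hαnP : α n ∈ P := by
    rw [hP, Multiset.mem_map]
    exact ⟨n, by simp [Multiset.mem_range], rfl⟩
  refine ⟨?_, ?_, ?_⟩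
  · -- anonymity
    intro σ r
    rw [hg, hg]
    congr 2
    rw [← Multiset.map_map r σ, Multiset.map_univ_val_equiv]
  · -- uncompromisingness
    intro i r r' _ _ hne
    have hiu : i ∈ (Finset.univ : Finset (Fin n)).val := Finset.mem_univ i
    have hdec : ∀ f : Fin n → ℝ,
        (Finset.univ : Finset (Fin n)).val.map f
          = f i ::ₘ ((Finset.univ : Finset (Fin n)).val.erase i).map f := by
      intro f
      conv_lhs => rw [← Multiset.cons_erase hiu]
      rw [Multiset.map_cons]
    have hmapeq : ((Finset.univ : Finset (Fin n)).val.erase i).map r'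
        = ((Finset.univ : Finset (Fin n)).val.erase i).map r := by
      apply Multiset.map_congr rfl
      intro j hj
      exact hne j ((Finset.univ.nodup.mem_erase_iff).1 hj).1
    set m := g r with hm
    constructor
    · intro hlt
      rw [hg] at hm
      have hcnt : Multiset.countP (· < m) ((Finset.univ : Finset (Fin n)).val.map r + P) ≤ n :=
        (le_med_iff n _ (hScard r) m).1 (le_of_eq hm)
      rw [hg r']
      apply (le_med_iff n _ (hScard r') m).2
      rw [Multiset.countP_add, hdec r', Multiset.countP_cons, hmapeq]
      rw [Multiset.countP_add, hdec r, Multiset.countP_cons] at hcnt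
      have h1 : (if r i < m then 1 else 0) = 1 := by simp [hlt]
      have h2 : (if r' i < m then 1 else 0) ≤ 1 := by split <;> simp
      omega
    · intro hgt
      rw [hg] at hm
      have hcnt : n + 1 ≤ Multiset.countP (· ≤ m)
          ((Finset.univ : Finset (Fin n)).val.map r + P) :=
        (med_le_iff n _ (hScard r) m).1 (ge_of_eq hm)
      rw [ge_iff_le, hg r']
      apply (med_le_iff n _ (hScard r') m).2
      rw [Multiset.countP_add, hdec r', Multiset.countP_cons, hmapeq]
      rw [Multiset.countP_add, hdec r, Multiset.countP_cons] at hcnt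
      have h1 : (if r i ≤ m then 1 else 0) = 0 := by
        simp only [ite_eq_right_iff]; intro h; linarith
      omega
  · -- unanimity iff
    have hconst : ∀ (x : ℝ) (p : ℝ → Prop) [DecidablePred p],
        Multiset.countP p ((Finset.univ : Finset (Fin n)).val.map (fun _ => x))
          = if p x then n else 0 := by
      intro x p _
      rw [Multiset.map_const']
      split
      · rename_i h
        rw [Multiset.countP_eq_card.2 (by intro a ha; rwa [Multiset.eq_of_mem_replicate ha])]
        simp [Finset.card_univ]
      · rename_i h
        rw [Multiset.countP_eq_zero.2 (by intro a ha; rwa [Multiset.eq_of_mem_replicate ha])]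
    constructor
    · intro h
      constructor
      · -- α 0 = 0
        have h0 := h 0 (by simp)
        rw [hg] at h0
        have := (med_le_iff n _ (hScard (fun _ => 0)) 0).1 (le_of_eq h0)
        rw [Multiset.countP_add, hconst 0 (· ≤ 0)] at this
        simp only [le_refl, if_true] at this
        have hpos : 0 < Multiset.countP (· ≤ (0:ℝ)) P := by omega
        obtain ⟨a, haP, ha⟩ := Multiset.countP_pos.1 hpos
        obtain ⟨k, hk, rfl⟩ := hPmem a haP
        have h1 := (hα 0 (by omega)).1
        have h2 := hαmono 0 k (by omega) hk
        linarith
      · -- α n = 1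
        have h1 := h 1 (by simp)
        rw [hg] at h1
        have := (le_med_iff n _ (hScard (fun _ => 1)) 1).1 (ge_of_eq h1)
        rw [Multiset.countP_add, hconst 1 (· < 1)] at this
        simp only [lt_self_iff_false, if_false] at this
        have hne : Multiset.countP (· < (1:ℝ)) P ≠ Multiset.card P := by omega
        have hex : ∃ a ∈ P, ¬ a < 1 := by
          by_contra hc
          push_neg at hc
          exact hne (Multiset.countP_eq_card.2 hc)
        obtain ⟨a, haP, ha⟩ := hex
        obtain ⟨k, hk, rfl⟩ := hPmem a haP
        have h2 := (hα n le_rfl).2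
        have h3 := hαmono k n hk le_rfl
        push_neg at ha
        linarith
    · rintro ⟨h0, h1⟩ x hx
      rw [hg]
      apply le_antisymm
      · apply (med_le_iff n _ (hScard (fun _ => x)) x).2
        rw [Multiset.countP_add, hconst x (· ≤ x)]
        simp only [le_refl, if_true]
        have : 0 < Multiset.countP (· ≤ x) P :=
          Multiset.countP_pos.2 ⟨α 0, hα0P, by rw [h0]; exact hx.1⟩
        omega
      · apply (le_med_iff n _ (hScard (fun _ => x)) x).2
        rw [Multiset.countP_add, hconst x (· < x)]
        simp only [lt_self_iff_false, if_false]
        have hne : Multiset.countP (· < x) P ≠ Multiset.card P := by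
          intro hc
          have := Multiset.countP_eq_card.1 hc (α n) hαnP
          rw [h1] at this
          linarith [hx.2]
        have := Multiset.countP_le_card (· < x) P
        omega
end

section
/- If Ψ : C^N → C is level-strategyproof, then for any σ-finite measure ν on Λ and any r ≥ 1, honest reporting maximizes the utility u_i(P'_i) = −‖Ψ(P_{-i}(P'_i)) − P_i‖_{L_r(ν)}: for all profiles P, voters i and deviations P'_i, ‖Ψ(P_{-i}(P'_i)) − P_i‖_{L_r(ν)} ≥ ‖Ψ(P) − P_i‖_{L_r(ν)}. -/
open MeasureTheory

/-- Level-strategyproofness implies classical strategyproofness for all `L_r`-metric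
single-peaked preferences on the CDF space: by deviating, a voter can never strictly
decrease the `L_r(ν)` distance between the aggregate CDF and their own CDF. -/
theorem levelSP_implies_Lr_strategyproof
    {Λ : Type*} [MeasurableSpace Λ] (ν : Measure Λ) [SigmaFinite ν]
    (r : ℝ) (hr : 1 ≤ r)
    (n : ℕ) (C : Set (Λ → ℝ))
    (Ψ : (Fin n → (Λ → ℝ)) → (Λ → ℝ))
    (hSP : ∀ (a : Λ) (i : Fin n) (P P' : Fin n → (Λ → ℝ)),
      (∀ j, P j ∈ C) → (∀ j, P' j ∈ C) → (∀ j, j ≠ i → P' j = P j) →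
      (P i a < Ψ P a → Ψ P a ≤ Ψ P' a) ∧ (P i a > Ψ P a → Ψ P a ≥ Ψ P' a)) :
    ∀ (i : Fin n) (P P' : Fin n → (Λ → ℝ)),
      (∀ j, P j ∈ C) → (∀ j, P' j ∈ C) → (∀ j, j ≠ i → P' j = P j) →
      eLpNorm (fun a => Ψ P' a - P i a) (ENNReal.ofReal r) ν
        ≥ eLpNorm (fun a => Ψ P a - P i a) (ENNReal.ofReal r) ν := by
  intro i P P' hP hP' hj
  apply eLpNorm_mono
  intro a
  have h := hSP a i P P' hP hP' hj
  simp only [Real.norm_eq_abs]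
  rcases lt_trichotomy (P i a) (Ψ P a) with hlt | heq | hgt
  · have := h.1 hlt
    rw [abs_of_pos (by linarith), abs_of_pos (by linarith)]
    linarith
  · simp [heq]
  · have := h.2 hgt
    rw [abs_of_neg (by linarith), abs_of_neg (by linarith)]
    linarith
end

section
/- If Ψ : C^N → C is level-strategyproof, then for every threshold a ∈ Λ there exists a function g_a : [0,1]^N → [0,1] such that Ψ(P)(a) = g_a(P_1(a),…,P_n(a)) for all profiles P; that is, the aggregate value at level a depends only on the input values at level a. Moreover each g_a is uncompromising. -/
open Set

/-- If `Ψ` is level-strategyproof on a rich set `C` of CDFs (any value in `[0,1]` at any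
threshold is realizable by some member of `C`), then for every threshold `a` there is a
one-dimensional voting rule `g_a` with `Ψ(P)(a) = g_a (P 1 a, …, P n a)`; moreover
each `g_a` is uncompromising on `[0,1]`-valued profiles. -/
theorem levelSP_pointwise_rule_exists
    {Λ : Type*} (n : ℕ) (C : Set (Λ → ℝ))
    (hrange : ∀ P ∈ C, ∀ a, P a ∈ Icc (0:ℝ) 1)
    (hrich : ∀ (a : Λ) (v : ℝ), v ∈ Icc (0:ℝ) 1 → ∃ P ∈ C, P a = v)
    (Ψ : (Fin n → (Λ → ℝ)) → (Λ → ℝ))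
    (hSP : ∀ (a : Λ) (i : Fin n) (P P' : Fin n → (Λ → ℝ)),
      (∀ j, P j ∈ C) → (∀ j, P' j ∈ C) → (∀ j, j ≠ i → P' j = P j) →
      (P i a < Ψ P a → Ψ P a ≤ Ψ P' a) ∧ (P i a > Ψ P a → Ψ P a ≥ Ψ P' a)) :
    ∀ a : Λ, ∃ g : (Fin n → ℝ) → ℝ,
      (∀ P : Fin n → (Λ → ℝ), (∀ j, P j ∈ C) → Ψ P a = g (fun i => P i a)) ∧
      (∀ (i : Fin n) (r r' : Fin n → ℝ),
        (∀ j, r j ∈ Icc (0:ℝ) 1) → (∀ j, r' j ∈ Icc (0:ℝ) 1) →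
        (∀ j, j ≠ i → r' j = r j) →
        (r i < g r → g r ≤ g r') ∧ (r i > g r → g r ≥ g r')) := by
  intro a
  classical
  -- one-step invariance: changing one voter's CDF without changing its value at `a`
  -- does not change `Ψ · a`.
  have step : ∀ (i : Fin n) (P P' : Fin n → Λ → ℝ), (∀ j, P j ∈ C) → (∀ j, P' j ∈ C) →
      (∀ j, j ≠ i → P' j = P j) → P i a = P' i a → Ψ P a = Ψ P' a := by
    intro i P P' hP hP' hagree hval
    have h1 := hSP a i P P' hP hP' hagree
    have h2 := hSP a i P' P hP' hP (fun j hj => (hagree j hj).symm)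
    rcases lt_trichotomy (P i a) (Ψ P a) with h | h | h
    · have hle := h1.1 h
      have h' : P' i a < Ψ P' a := by rw [← hval]; exact lt_of_lt_of_le h hle
      exact le_antisymm hle (h2.1 h')
    · rcases lt_trichotomy (Ψ P' a) (Ψ P a) with h' | h' | h'
      · have hgt : P' i a > Ψ P' a := by rw [← hval, h]; exact h'
        exact absurd (h2.2 hgt) (not_le.mpr h')
      · exact h'.symm
      · have hlt : P' i a < Ψ P' a := by rw [← hval, h]; exact h'
        exact absurd (h2.1 hlt) (not_le.mpr h')
    · have hge := h1.2 h
      have h' : P' i a > Ψ P' a := by rw [← hval]; exact lt_of_le_of_lt hge h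
      exact le_antisymm (h2.2 h') hge
  -- full invariance: `Ψ P a` depends only on the values `P j a`.
  have key : ∀ (P Q : Fin n → Λ → ℝ), (∀ j, P j ∈ C) → (∀ j, Q j ∈ C) →
      (∀ j, P j a = Q j a) → Ψ P a = Ψ Q a := by
    have main : ∀ k : ℕ, ∀ (P Q : Fin n → Λ → ℝ), (∀ j, P j ∈ C) → (∀ j, Q j ∈ C) →
        (∀ j, P j a = Q j a) → (∀ j : Fin n, k ≤ (j : ℕ) → P j = Q j) → Ψ P a = Ψ Q a := by
      intro k
      induction k with
      | zero =>
        intro P Q _ _ _ hup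
        have : P = Q := funext fun j => hup j (Nat.zero_le _)
        rw [this]
      | succ k ih =>
        intro P Q hP hQ hval hup
        by_cases hk : k < n
        · set i : Fin n := ⟨k, hk⟩
          set R : Fin n → Λ → ℝ := Function.update P i (Q i) with hR
          have hRmem : ∀ j, R j ∈ C := by
            intro j
            by_cases hj : j = i
            · simp [hR, hj, hQ i]
            · simp [hR, Function.update_of_ne hj, hP j]
          have hRa : ∀ j, R j a = Q j a := by
            intro j
            by_cases hj : j = i
            · simp [hR, hj]
            · simp [hR, Function.update_of_ne hj, hval j]
          have h1 : Ψ P a = Ψ R a := by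
            refine step i P R hP hRmem (fun j hj => ?_) ?_
            · simp [hR, Function.update_of_ne hj]
            · have : R i a = Q i a := by simp [hR]
              rw [this]; exact hval i
          have h2 : Ψ R a = Ψ Q a := by
            refine ih R Q hRmem hQ hRa (fun j hj => ?_)
            by_cases hji : j = i
            · simp [hR, hji]
            · have : k + 1 ≤ (j : ℕ) := by
                rcases lt_or_eq_of_le hj with h | h
                · exact h
                · exact absurd (Fin.ext h.symm : j = i) hji
              rw [show R j = P j by simp [hR, Function.update_of_ne hji]]
              exact hup j this
          rw [h1, h2]
        · refine ih P Q hP hQ hval (fun j hj => ?_)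
          exact absurd (lt_of_le_of_lt hj j.isLt) (by omega)
    intro P Q hP hQ hval
    exact main n P Q hP hQ hval (fun j hj => absurd j.isLt (by omega))
  -- pick a CDF realizing a given value at `a`
  have h01 : (0:ℝ) ∈ Icc (0:ℝ) 1 := ⟨le_refl 0, zero_le_one⟩
  set pick : ℝ → (Λ → ℝ) := fun v =>
    if h : v ∈ Icc (0:ℝ) 1 then (hrich a v h).choose else (hrich a 0 h01).choose with hpick
  have pick_mem : ∀ v, pick v ∈ C := by
    intro v
    by_cases h : v ∈ Icc (0:ℝ) 1
    · simp only [hpick, dif_pos h]; exact (hrich a v h).choose_spec.1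
    · simp only [hpick, dif_neg h]; exact (hrich a 0 h01).choose_spec.1
  have pick_val : ∀ v, v ∈ Icc (0:ℝ) 1 → pick v a = v := by
    intro v h
    simp only [hpick, dif_pos h]; exact (hrich a v h).choose_spec.2
  refine ⟨fun r => Ψ (fun i => pick (r i)) a, ?_, ?_⟩
  · intro P hP
    exact key P (fun i => pick (P i a)) hP (fun j => pick_mem _)
      (fun j => ((pick_val (P j a) (hrange (P j) (hP j) a)).symm))
  · intro i r r' hr hr' hagree
    set Pr : Fin n → Λ → ℝ := fun j => pick (r j) with hPr
    set Q : Fin n → Λ → ℝ := Function.update Pr i (pick (r' i)) with hQ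
    have hPrmem : ∀ j, Pr j ∈ C := fun j => pick_mem _
    have hQmem : ∀ j, Q j ∈ C := by
      intro j
      by_cases hj : j = i
      · simp [hQ, hj, pick_mem]
      · simp [hQ, Function.update_of_ne hj, hPrmem j]
    have hQr' : ∀ j, Q j a = r' j := by
      intro j
      by_cases hj : j = i
      · simp [hQ, hj, pick_val _ (hr' i)]
      · simp [hQ, Function.update_of_ne hj, hPr, pick_val _ (hr j), hagree j hj]
    have hQval : Ψ Q a = Ψ (fun j => pick (r' j)) a :=
      key Q _ hQmem (fun j => pick_mem _)
        (fun j => by rw [hQr' j, pick_val _ (hr' j)])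
    have hPrval : Pr i a = r i := pick_val _ (hr i)
    have hsp := hSP a i Pr Q hPrmem hQmem (fun j hj => by
      simp [hQ, Function.update_of_ne hj])
    constructor
    · intro hlt
      have : Pr i a < Ψ Pr a := by rw [hPrval]; exact hlt
      have := hsp.1 this
      rw [hQval] at this; exact this
    · intro hgt
      have : Pr i a > Ψ Pr a := by rw [hPrval]; exact hgt
      have := hsp.2 this
      rw [hQval] at this; exact this
end

section
/- Let f_S : Λ → [0,1] for S ⊆ N be weakly increasing right-continuous functions with f_S ≤ f_{S'} whenever S ⊆ S', f_N tending to 1 at sup Λ and f_∅ tending to 0 at inf Λ. Then the function Ψ defined by Ψ(P)(a) = max over S ⊆ N of min(f_S(a), min over i∈S of P_i(a)) maps CDF profiles to CDFs and is level-strategyproof. -/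
open Set Finset Filter Topology

/-- A CDF on `Λ = ℝ`: weakly increasing, right-continuous, tending to `1` at `sup Λ`
and to `0` at `inf Λ`. -/
def IsCDF (P : ℝ → ℝ) : Prop :=
  Monotone P ∧ (∀ a, ContinuousWithinAt P (Ici a) a) ∧
    Tendsto P atTop (𝓝 1) ∧ Tendsto P atBot (𝓝 0)

section Aux

variable {n : ℕ}

/-- The max-min value as a function of the phantom system, a level, and a vector of values. -/
noncomputable def psiVal (f : Finset (Fin n) → ℝ → ℝ) (a : ℝ) (v : Fin n → ℝ) : ℝ :=
  (Finset.univ : Finset (Fin n)).powerset.fold max 0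
    (fun S => min (f S a) (S.fold min 1 v))

lemma psiVal_nonneg (f : Finset (Fin n) → ℝ → ℝ) (a : ℝ) (v : Fin n → ℝ) :
    0 ≤ psiVal f a v :=
  (Finset.le_fold_max _).2 (Or.inl le_rfl)

lemma term_le_psiVal (f : Finset (Fin n) → ℝ → ℝ) (a : ℝ) (v : Fin n → ℝ)
    (S : Finset (Fin n)) :
    min (f S a) (S.fold min 1 v) ≤ psiVal f a v :=
  (Finset.le_fold_max _).2 (Or.inr ⟨S, Finset.mem_powerset.2 (Finset.subset_univ S), le_rfl⟩)

lemma psiVal_le (f : Finset (Fin n) → ℝ → ℝ) (a : ℝ) (v : Fin n → ℝ) {c : ℝ} (h0 : 0 ≤ c)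
    (h : ∀ S : Finset (Fin n), min (f S a) (S.fold min 1 v) ≤ c) :
    psiVal f a v ≤ c :=
  (Finset.fold_max_le _).2 ⟨h0, fun S _ => h S⟩

lemma foldmin_le_one (S : Finset (Fin n)) (v : Fin n → ℝ) : S.fold min 1 v ≤ 1 :=
  (Finset.fold_min_le _).2 (Or.inl le_rfl)

lemma foldmin_le (S : Finset (Fin n)) (v : Fin n → ℝ) {i : Fin n} (hi : i ∈ S) :
    S.fold min 1 v ≤ v i :=
  (Finset.fold_min_le _).2 (Or.inr ⟨i, hi, le_rfl⟩)

lemma foldmin_mono (S : Finset (Fin n)) {v w : Fin n → ℝ} (h : ∀ i ∈ S, v i ≤ w i) :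
    S.fold min 1 v ≤ S.fold min 1 w :=
  (Finset.le_fold_min _).2 ⟨foldmin_le_one S v, fun i hi => (foldmin_le S v hi).trans (h i hi)⟩

lemma foldmin_erase (S : Finset (Fin n)) {i : Fin n} (hi : i ∈ S) (v : Fin n → ℝ) :
    S.fold min 1 v = min (v i) ((S.erase i).fold min 1 v) := by
  conv_lhs => rw [← Finset.insert_erase hi]
  rw [Finset.fold_insert (Finset.notMem_erase i S)]

lemma fold_max_mem_or (T : Finset (Finset (Fin n))) (g : Finset (Fin n) → ℝ) :
    T.fold max 0 g = 0 ∨ ∃ S ∈ T, T.fold max 0 g = g S := by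
  classical
  induction T using Finset.induction_on with
  | empty => exact Or.inl Finset.fold_empty
  | @insert A T hA ih =>
    rw [Finset.fold_insert hA]
    rcases le_total (g A) (T.fold max 0 g) with h | h
    · rw [max_eq_right h]
      rcases ih with h' | ⟨S, hS, h'⟩
      · exact Or.inl h'
      · exact Or.inr ⟨S, Finset.mem_insert_of_mem hS, h'⟩
    · rw [max_eq_left h]
      exact Or.inr ⟨A, Finset.mem_insert_self A T, rfl⟩

lemma foldmin_cwa {S : Finset (Fin n)} {P : Fin n → ℝ → ℝ} {a : ℝ}
    (h : ∀ i ∈ S, ContinuousWithinAt (P i) (Ici a) a) :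
    ContinuousWithinAt (fun b => S.fold min 1 (fun i => P i b)) (Ici a) a := by
  classical
  induction S using Finset.induction_on with
  | empty => simpa using continuousWithinAt_const
  | @insert j S hj ih =>
    simp only [Finset.fold_insert hj]
    exact (h j (Finset.mem_insert_self j S)).min
      (ih fun i hi => h i (Finset.mem_insert_of_mem hi))

lemma foldmax_cwa {T : Finset (Finset (Fin n))} {g : Finset (Fin n) → ℝ → ℝ} {a : ℝ}
    (h : ∀ S ∈ T, ContinuousWithinAt (g S) (Ici a) a) :
    ContinuousWithinAt (fun b => T.fold max 0 (fun S => g S b)) (Ici a) a := by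
  classical
  induction T using Finset.induction_on with
  | empty => simpa using continuousWithinAt_const
  | @insert A T hA ih =>
    simp only [Finset.fold_insert hA]
    exact (h A (Finset.mem_insert_self A T)).max
      (ih fun S hS => h S (Finset.mem_insert_of_mem hS))

lemma foldmin_tendsto_one {S : Finset (Fin n)} {P : Fin n → ℝ → ℝ}
    (h : ∀ i ∈ S, Tendsto (P i) atTop (𝓝 1)) :
    Tendsto (fun a => S.fold min 1 (fun i => P i a)) atTop (𝓝 1) := by
  classical
  induction S using Finset.induction_on with
  | empty => simpa using (tendsto_const_nhds : Tendsto (fun _ : ℝ => (1:ℝ)) atTop (𝓝 1))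
  | @insert j S hj ih =>
    simp only [Finset.fold_insert hj]
    have := (h j (Finset.mem_insert_self j S)).min
      (ih fun i hi => h i (Finset.mem_insert_of_mem hi))
    simpa using this

end Aux

/-- Given inclusion-monotone, weakly increasing, right-continuous phantom functions
`f_S : Λ → [0,1]` with `f_N → 1` at `sup Λ` and `f_∅ → 0` at `inf Λ`, the max-min
formula `Ψ(P)(a) = max_{S ⊆ N} min (f S a, min_{i ∈ S} P i a)` maps CDF profiles to
CDFs and is level-strategyproof. -/
theorem maxmin_phantom_CAF_is_levelSP
    (n : ℕ) (f : Finset (Fin n) → ℝ → ℝ)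
    (hrange : ∀ S a, f S a ∈ Icc (0:ℝ) 1)
    (hmonoa : ∀ S, Monotone (f S))
    (hrc : ∀ S a, ContinuousWithinAt (f S) (Ici a) a)
    (hmonoS : ∀ S S' : Finset (Fin n), S ⊆ S' → ∀ a, f S a ≤ f S' a)
    (htop : Tendsto (f (Finset.univ : Finset (Fin n))) atTop (𝓝 1))
    (hbot : Tendsto (f (∅ : Finset (Fin n))) atBot (𝓝 0))
    (Ψ : (Fin n → (ℝ → ℝ)) → (ℝ → ℝ))
    (hΨ : ∀ (P : Fin n → (ℝ → ℝ)) (a : ℝ),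
      Ψ P a = (Finset.univ : Finset (Fin n)).powerset.fold max 0
                (fun S => min (f S a) (S.fold min 1 (fun i => P i a)))) :
    (∀ P : Fin n → (ℝ → ℝ), (∀ i, IsCDF (P i)) → IsCDF (Ψ P)) ∧
    (∀ (a : ℝ) (i : Fin n) (P P' : Fin n → (ℝ → ℝ)),
      (∀ j, IsCDF (P j)) → (∀ j, IsCDF (P' j)) → (∀ j, j ≠ i → P' j = P j) →
      (P i a < Ψ P a → Ψ P a ≤ Ψ P' a) ∧ (P i a > Ψ P a → Ψ P a ≥ Ψ P' a)) := by
  have key : ∀ (P : Fin n → (ℝ → ℝ)) (a : ℝ), Ψ P a = psiVal f a (fun i => P i a) :=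
    fun P a => hΨ P a
  constructor
  · -- Ψ maps CDF profiles to CDFs
    intro P hP
    have hPnn : ∀ (i : Fin n) (a : ℝ), 0 ≤ P i a :=
      fun i a => (hP i).1.le_of_tendsto (hP i).2.2.2 a
    refine ⟨?_, ?_, ?_, ?_⟩
    · -- monotone
      intro a b hab
      rw [key P a, key P b]
      refine psiVal_le f a _ (psiVal_nonneg f b _) (fun S => ?_)
      refine le_trans ?_ (term_le_psiVal f b _ S)
      exact min_le_min (hmonoa S hab) (foldmin_mono S (fun i _ => (hP i).1 hab))
    · -- right continuity
      intro a
      have : ContinuousWithinAt (fun b => psiVal f b (fun i => P i b)) (Ici a) a := by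
        unfold psiVal
        exact foldmax_cwa (fun S _ => (hrc S a).min (foldmin_cwa (fun i _ => (hP i).2.1 a)))
      exact this.congr (fun b _ => key P b) (key P a)
    · -- tends to 1 at +∞
      have hlow : ∀ a, min (f Finset.univ a) (Finset.univ.fold min 1 (fun i => P i a))
          ≤ Ψ P a := by
        intro a; rw [key P a]; exact term_le_psiVal f a _ _
      have hup : ∀ a, Ψ P a ≤ 1 := by
        intro a; rw [key P a]
        exact psiVal_le f a _ zero_le_one
          (fun S => (min_le_left _ _).trans (hrange S a).2)
      have hlt : Tendsto (fun a => min (f Finset.univ a)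
          (Finset.univ.fold min 1 (fun i => P i a))) atTop (𝓝 1) := by
        have := htop.min (foldmin_tendsto_one (S := Finset.univ) (fun i _ => (hP i).2.2.1))
        simpa using this
      exact tendsto_of_tendsto_of_tendsto_of_le_of_le hlt tendsto_const_nhds hlow hup
    · -- tends to 0 at -∞
      have hup : ∀ a, Ψ P a ≤ f ∅ a + ∑ i, P i a := by
        intro a; rw [key P a]
        refine psiVal_le f a _
          (add_nonneg (hrange ∅ a).1 (Finset.sum_nonneg fun i _ => hPnn i a)) (fun S => ?_)
        rcases S.eq_empty_or_nonempty with rfl | ⟨j, hj⟩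
        · exact (min_le_left _ _).trans
            (le_add_of_nonneg_right (Finset.sum_nonneg fun i _ => hPnn i a))
        · refine (min_le_right _ _).trans ((foldmin_le S _ hj).trans ?_)
          exact le_add_of_nonneg_left (hrange ∅ a).1 |>.trans' <| by
            exact Finset.single_le_sum (fun i _ => hPnn i a) (Finset.mem_univ j)
      have hlow : ∀ a, (0:ℝ) ≤ Ψ P a := by
        intro a; rw [key P a]; exact psiVal_nonneg f a _
      have hst : Tendsto (fun a => f ∅ a + ∑ i, P i a) atBot (𝓝 0) := by
        have hsum : Tendsto (fun a => ∑ i, P i a) atBot (𝓝 0) := by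
          have := tendsto_finset_sum (Finset.univ : Finset (Fin n))
            (fun i _ => (hP i).2.2.2)
          simpa using this
        simpa using hbot.add hsum
      exact tendsto_of_tendsto_of_tendsto_of_le_of_le tendsto_const_nhds hst hlow hup
  · -- level strategyproofness
    intro a i P P' hP hP' hdiff
    set v : Fin n → ℝ := fun j => P j a with hv
    set v' : Fin n → ℝ := fun j => P' j a with hv'
    have hvv' : ∀ j ∈ Finset.univ.erase i, v' j = v j := by
      intro j hj
      simp only [hv, hv', hdiff j (Finset.ne_of_mem_erase hj)]
    have hvv'' : ∀ (S : Finset (Fin n)), i ∉ S → S.fold min 1 v' = S.fold min 1 v := by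
      intro S hiS
      exact Finset.fold_congr (fun j hj => by
        simp only [hv, hv', hdiff j (fun h => hiS (h ▸ hj))])
    rw [key P a, key P' a]
    constructor
    · -- P i a < Ψ P a
      intro hlt
      rcases fold_max_mem_or ((Finset.univ : Finset (Fin n)).powerset)
        (fun S => min (f S a) (S.fold min 1 v)) with h0 | ⟨S₀, _, hS₀⟩
      · rw [show psiVal f a v = (0:ℝ) from h0]
        exact psiVal_nonneg f a v'
      · have hpsi : psiVal f a v = min (f S₀ a) (S₀.fold min 1 v) := hS₀
        have hiS₀ : i ∉ S₀ := by
          intro hmem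
          have : psiVal f a v ≤ v i :=
            hpsi.le.trans ((min_le_right _ _).trans (foldmin_le S₀ v hmem))
          exact absurd hlt (not_lt.2 this)
        calc psiVal f a v = min (f S₀ a) (S₀.fold min 1 v') := by
              rw [hpsi, hvv'' S₀ hiS₀]
          _ ≤ psiVal f a v' := term_le_psiVal f a v' S₀
    · -- P i a > Ψ P a
      intro hgt
      refine psiVal_le f a v' (psiVal_nonneg f a v) (fun S => ?_)
      by_cases hiS : i ∈ S
      · have hterm : min (f S a) (S.fold min 1 v) ≤ psiVal f a v := term_le_psiVal f a v S
        set rest : ℝ := (S.erase i).fold min 1 v with hrest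
        have hrest' : (S.erase i).fold min 1 v' = rest :=
          hvv'' (S.erase i) (Finset.notMem_erase i S)
        rw [foldmin_erase S hiS v] at hterm
        rw [foldmin_erase S hiS v', hrest']
        by_cases hle : min (f S a) rest ≤ v i
        · have heq : min (f S a) (min (v i) rest) = min (f S a) rest := by
            rw [min_left_comm]
            exact min_eq_right hle
          calc min (f S a) (min (v' i) rest) ≤ min (f S a) rest :=
                min_le_min le_rfl (min_le_right _ _)
            _ = min (f S a) (min (v i) rest) := heq.symm
            _ ≤ psiVal f a v := hterm
        · push_neg at hle
          have : min (f S a) (min (v i) rest) = v i := by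
            rw [min_left_comm]
            exact min_eq_left hle.le
          rw [this] at hterm
          exact absurd hgt (not_lt.2 hterm)
      · rw [hvv'' S hiS]
        exact term_le_psiVal f a v S
end

section
/- A level-strategyproof PAF with max-min representation via phantom functions f_S is certainty preserving if and only if it is unanimous and all the phantom functions f_S are constant functions. -/
open Set Finset MeasureTheory

section aux
variable {ι : Type*}

lemma foldmin_eq_of_const (T : Finset ι) (hT : T.Nonempty) {t : ℝ} (ht : t ≤ 1)
    {g : ι → ℝ} (hg : ∀ i ∈ T, g i = t) : T.fold min 1 g = t := by
  rcases hT with ⟨j, hj⟩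
  refine le_antisymm ((Finset.fold_min_le _).2 (Or.inr ⟨j, hj, (hg j hj).le⟩))
    ((Finset.le_fold_min _).2 ⟨ht, fun i hi => (hg i hi).ge⟩)

lemma foldmin_sub_le (S : Finset ι) (g h : ι → ℝ) (hgh : ∀ i ∈ S, g i ≤ h i) :
    S.fold min 1 h ≤ S.fold min 1 g + ∑ i ∈ S, (h i - g i) := by
  induction S using Finset.cons_induction with
  | empty => simp
  | cons a S ha IH =>
    have hgh' : ∀ i ∈ S, g i ≤ h i := fun i hi => hgh i (Finset.mem_cons_of_mem hi)
    have IH' := IH hgh'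
    have hs : (0:ℝ) ≤ ∑ i ∈ S, (h i - g i) :=
      Finset.sum_nonneg fun i hi => sub_nonneg.2 (hgh' i hi)
    have hd : g a ≤ h a := hgh a (Finset.mem_cons_self a S)
    rw [Finset.fold_cons, Finset.fold_cons, Finset.sum_cons]
    rcases le_total (g a) (S.fold min 1 g) with hc | hc
    · rw [min_eq_left hc]
      have := min_le_left (h a) (S.fold min 1 h)
      linarith
    · rw [min_eq_right hc]
      have := min_le_right (h a) (S.fold min 1 h)
      linarith

lemma maxmin_increment {n : ℕ} (c : Finset (Fin n) → ℝ) (P Q : Fin n → ℝ)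
    (hPQ : ∀ i, P i ≤ Q i) :
    (Finset.univ : Finset (Fin n)).powerset.fold max 0
        (fun S => min (c S) (S.fold min 1 Q))
      ≤ (Finset.univ : Finset (Fin n)).powerset.fold max 0
          (fun S => min (c S) (S.fold min 1 P)) + ∑ i, (Q i - P i) := by
  have hsum : (0:ℝ) ≤ ∑ i, (Q i - P i) :=
    Finset.sum_nonneg fun i _ => sub_nonneg.2 (hPQ i)
  have hP0 : (0:ℝ) ≤ (Finset.univ : Finset (Fin n)).powerset.fold max 0
      (fun S => min (c S) (S.fold min 1 P)) := (Finset.le_fold_max _).2 (Or.inl le_rfl)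
  refine (Finset.fold_max_le _).2 ⟨by linarith, fun S _ => ?_⟩
  have h1 : S.fold min 1 Q ≤ S.fold min 1 P + ∑ i ∈ S, (Q i - P i) :=
    foldmin_sub_le S P Q (fun i _ => hPQ i)
  have h2 : ∑ i ∈ S, (Q i - P i) ≤ ∑ i, (Q i - P i) :=
    Finset.sum_le_sum_of_subset_of_nonneg (Finset.subset_univ S)
      (fun i _ _ => sub_nonneg.2 (hPQ i))
  have h3 : min (c S) (S.fold min 1 P) ≤ (Finset.univ : Finset (Fin n)).powerset.fold max 0
      (fun S => min (c S) (S.fold min 1 P)) :=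
    (Finset.le_fold_max _).2 (Or.inr ⟨S, by simp, le_rfl⟩)
  rcases le_total (c S) (S.fold min 1 P) with hc | hc
  · have := min_le_left (c S) (S.fold min 1 Q)
    rw [min_eq_left hc] at h3
    linarith
  · have := min_le_right (c S) (S.fold min 1 Q)
    rw [min_eq_right hc] at h3
    linarith

lemma stieltjes_sum_apply (s : Finset ι) (g : ι → StieltjesFunction ℝ) (x : ℝ) :
    (∑ i ∈ s, g i) x = ∑ i ∈ s, g i x := by
  induction s using Finset.cons_induction with
  | empty => simp
  | cons a s ha IH => rw [Finset.sum_cons, Finset.sum_cons, StieltjesFunction.add_apply, IH]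

lemma stieltjes_measure_sum (s : Finset ι) (g : ι → StieltjesFunction ℝ) :
    (∑ i ∈ s, g i).measure = ∑ i ∈ s, (g i).measure := by
  induction s using Finset.cons_induction with
  | empty =>
    rw [Finset.sum_empty, Finset.sum_empty]
    exact StieltjesFunction.measure_const 0
  | cons a s ha IH =>
    rw [Finset.sum_cons, Finset.sum_cons, StieltjesFunction.measure_add, IH]

end aux

/-- A level-strategyproof PAF, given by its max-min representation via phantom
functions `f_S`, is certainty preserving iff it is unanimous and all the phantom
functions are constant. -/
theorem levelSP_certainty_preserving_iff_unanimous_constant_phantoms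
    (n : ℕ) (hn : 0 < n)
    (ψ : (Fin n → Measure ℝ) → Measure ℝ)
    (hprob : ∀ p : Fin n → Measure ℝ, (∀ i, IsProbabilityMeasure (p i)) →
      IsProbabilityMeasure (ψ p))
    (f : Finset (Fin n) → ℝ → ℝ)
    (hrange : ∀ S a, f S a ∈ Icc (0:ℝ) 1)
    (hmonoa : ∀ S, Monotone (f S))
    (hmonoS : ∀ S S' : Finset (Fin n), S ⊆ S' → ∀ a, f S a ≤ f S' a)
    -- max-min representation of the associated CAF via the phantom functions
    (hrep : ∀ p : Fin n → Measure ℝ, (∀ i, IsProbabilityMeasure (p i)) → ∀ a : ℝ,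
      (ψ p (Iic a)).toReal
        = (Finset.univ : Finset (Fin n)).powerset.fold max 0
            (fun S => min (f S a) (S.fold min 1 (fun i => (p i (Iic a)).toReal)))) :
    -- certainty preservation
    (∀ p : Fin n → Measure ℝ, (∀ i, IsProbabilityMeasure (p i)) →
        ∀ A : Set ℝ, MeasurableSet A → (∀ i, p i A = 1) → ψ p A = 1)
      ↔
    -- unanimity and constant phantom functions
    ((∀ q : Measure ℝ, IsProbabilityMeasure q → ψ (fun _ => q) = q) ∧
      (∀ S, ∃ c : ℝ, ∀ a, f S a = c)) := by
  constructor
  · intro hcp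
    -- CDF of the dirac profile: δ_c for i ∈ S, δ_b for i ∉ S
    have hdirac : ∀ (S : Finset (Fin n)) (c b x : ℝ), c ≤ x → x < b →
        (ψ (fun i => if i ∈ S then Measure.dirac c else Measure.dirac b) (Iic x)).toReal
          = f S x := by
      intro S c b x hcx hxb
      set p : Fin n → Measure ℝ :=
        fun i => if i ∈ S then Measure.dirac c else Measure.dirac b with hp_def
      have hp : ∀ i, IsProbabilityMeasure (p i) := by
        intro i; rw [hp_def]; dsimp only; split <;> infer_instance
      have hPval : ∀ i, ((p i) (Iic x)).toReal = if i ∈ S then 1 else 0 := by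
        intro i
        by_cases hi : i ∈ S
        · simp [hp_def, hi, Measure.dirac_apply, Set.indicator_apply, Set.mem_Iic, hcx]
        · simp [hp_def, hi, Measure.dirac_apply, Set.indicator_apply, Set.mem_Iic,
            not_le.2 hxb]
      rw [hrep p hp x]
      apply le_antisymm
      · refine (Finset.fold_max_le _).2 ⟨(hrange S x).1, fun T _ => ?_⟩
        by_cases hTS : T ⊆ S
        · exact (min_le_left _ _).trans (hmonoS T S hTS x)
        · obtain ⟨i, hiT, hiS⟩ := Finset.not_subset.1 hTS
          have h0 : T.fold min 1 (fun i => ((p i) (Iic x)).toReal) ≤ 0 :=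
            (Finset.fold_min_le _).2 (Or.inr ⟨i, hiT, by rw [hPval i, if_neg hiS]⟩)
          exact le_trans ((min_le_right _ _).trans h0) (hrange S x).1
      · refine (Finset.le_fold_max _).2 (Or.inr ⟨S, by simp, ?_⟩)
        have h1 : S.fold min 1 (fun i => ((p i) (Iic x)).toReal) = 1 := by
          rcases S.eq_empty_or_nonempty with rfl | hS
          · simp
          · exact foldmin_eq_of_const S hS le_rfl
              (fun i hi => by rw [hPval i, if_pos hi])
        rw [h1]
        exact le_min le_rfl (hrange S x).2
    -- key: the phantom functions are locally constant, hence constant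
    have hkey : ∀ (S : Finset (Fin n)) (c b x : ℝ), c ≤ x → x < b → f S x = f S c := by
      intro S c b x hcx hxb
      set p : Fin n → Measure ℝ :=
        fun i => if i ∈ S then Measure.dirac c else Measure.dirac b with hp_def
      have hp : ∀ i, IsProbabilityMeasure (p i) := by
        intro i; rw [hp_def]; dsimp only; split <;> infer_instance
      haveI hψ := hprob p hp
      have hAmeas : MeasurableSet ({c, b} : Set ℝ) :=
        (measurableSet_singleton b).insert c
      have hA : ψ p ({c, b} : Set ℝ) = 1 := by
        apply hcp p hp _ hAmeas
        intro i
        by_cases hi : i ∈ S <;>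
          simp [hp_def, hi, Measure.dirac_apply, Set.indicator_apply]
      have hcompl : ψ p ({c, b} : Set ℝ)ᶜ = 0 :=
        (prob_compl_eq_zero_iff hAmeas).2 hA
      have hIoc : ψ p (Ioc c x) = 0 := by
        refine le_antisymm (le_trans (measure_mono ?_) hcompl.le) zero_le
        intro y hy
        simp only [Set.mem_compl_iff, Set.mem_insert_iff, Set.mem_singleton_iff, not_or]
        exact ⟨ne_of_gt hy.1, ne_of_lt (lt_of_le_of_lt hy.2 hxb)⟩
      have hsplit : ψ p (Iic x) = ψ p (Iic c) := by
        rw [← Set.Iic_union_Ioc_eq_Iic hcx,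
          measure_union (Set.Iic_disjoint_Ioc le_rfl) measurableSet_Ioc, hIoc, add_zero]
      have h1 := hdirac S c b x hcx hxb
      have h2 := hdirac S c b c le_rfl (lt_of_le_of_lt hcx hxb)
      rw [← hp_def] at h1 h2
      rw [← h1, ← h2, hsplit]
    have hconst : ∀ S, ∃ cS : ℝ, ∀ a, f S a = cS := by
      intro S
      refine ⟨f S 0, fun a => ?_⟩
      have h1 : f S a = f S (min a 0) :=
        hkey S (min a 0) (max a 0 + 1) a (min_le_left a 0)
          (lt_of_le_of_lt (le_max_left a 0) (lt_add_one _))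
      have h2 : f S 0 = f S (min a 0) :=
        hkey S (min a 0) (max a 0 + 1) 0 (min_le_right a 0)
          (lt_of_le_of_lt (le_max_right a 0) (lt_add_one _))
      rw [h1, h2]
    -- the phantom of the empty coalition is 0
    have hfempty : ∀ x, f (∅ : Finset (Fin n)) x = 0 := by
      intro x
      set p : Fin n → Measure ℝ :=
        fun i => if i ∈ (∅ : Finset (Fin n)) then Measure.dirac x
          else Measure.dirac (x + 1) with hp_def
      have hp : ∀ i, IsProbabilityMeasure (p i) := by
        intro i; rw [hp_def]; dsimp only; split <;> infer_instance
      haveI hψ := hprob p hp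
      have hA : ψ p ({x + 1} : Set ℝ) = 1 := by
        apply hcp p hp _ (measurableSet_singleton _)
        intro i
        simp [hp_def, Measure.dirac_apply, Set.indicator_apply]
      have h0 : ψ p (Iic x) = 0 := by
        have hsub : Iic x ⊆ ({x + 1} : Set ℝ)ᶜ := by
          intro y hy
          simp only [Set.mem_compl_iff, Set.mem_singleton_iff]
          intro h
          rw [Set.mem_Iic] at hy
          linarith
        refine le_antisymm (le_trans (measure_mono hsub) ?_) zero_le
        rw [(prob_compl_eq_zero_iff (measurableSet_singleton _)).2 hA]
      have h1 := hdirac ∅ x (x + 1) x le_rfl (lt_add_one x)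
      rw [← hp_def] at h1
      rw [h0] at h1
      simpa using h1.symm
    -- the phantom of the full coalition is 1
    have hfuniv : ∀ x, f (Finset.univ : Finset (Fin n)) x = 1 := by
      intro x
      set p : Fin n → Measure ℝ :=
        fun i => if i ∈ (Finset.univ : Finset (Fin n)) then Measure.dirac x
          else Measure.dirac (x + 1) with hp_def
      have hp : ∀ i, IsProbabilityMeasure (p i) := by
        intro i; rw [hp_def]; dsimp only; split <;> infer_instance
      haveI hψ := hprob p hp
      have hA : ψ p ({x} : Set ℝ) = 1 := by
        apply hcp p hp _ (measurableSet_singleton _)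
        intro i
        simp [hp_def, Measure.dirac_apply, Set.indicator_apply]
      have h1m : ψ p (Iic x) = 1 := by
        refine le_antisymm prob_le_one ?_
        rw [← hA]
        refine measure_mono ?_
        intro y hy
        simp only [Set.mem_singleton_iff] at hy
        rw [hy]
        exact Set.self_mem_Iic
      have h1 := hdirac Finset.univ x (x + 1) x le_rfl (lt_add_one x)
      rw [← hp_def] at h1
      rw [h1m] at h1
      simpa using h1.symm
    refine ⟨?_, hconst⟩
    -- unanimity
    intro q hq
    haveI := hq
    haveI := hprob (fun _ => q) (fun _ => hq)
    refine Measure.ext_of_Iic (ψ fun _ => q) q (fun a => ?_)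
    refine (ENNReal.toReal_eq_toReal_iff' (measure_ne_top _ _) (measure_ne_top _ _)).1 ?_
    rw [hrep (fun _ => q) (fun _ => hq) a]
    have ht0 : (0:ℝ) ≤ (q (Iic a)).toReal := ENNReal.toReal_nonneg
    have ht1 : (q (Iic a)).toReal ≤ 1 := by
      calc (q (Iic a)).toReal ≤ (1 : ENNReal).toReal :=
            ENNReal.toReal_mono ENNReal.one_ne_top prob_le_one
        _ = 1 := ENNReal.toReal_one
    apply le_antisymm
    · refine (Finset.fold_max_le _).2 ⟨ht0, fun T _ => ?_⟩
      rcases T.eq_empty_or_nonempty with rfl | hT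
      · exact (min_le_left _ _).trans ((hfempty a).le.trans ht0)
      · exact (min_le_right _ _).trans
          (foldmin_eq_of_const T hT ht1 (fun i _ => rfl)).le
    · haveI : Nonempty (Fin n) := ⟨⟨0, hn⟩⟩
      refine (Finset.le_fold_max _).2 (Or.inr ⟨Finset.univ, by simp, ?_⟩)
      exact le_min (ht1.trans (hfuniv a).ge)
        (foldmin_eq_of_const Finset.univ Finset.univ_nonempty ht1 (fun i _ => rfl)).ge
  · rintro ⟨huna, hconst⟩ p hp A hA hpA
    haveI hψ := hprob p hp
    haveI : ∀ i, IsProbabilityMeasure (p i) := hp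
    set F : StieltjesFunction ℝ := ProbabilityTheory.cdf (ψ p) with hF
    set K : Fin n → StieltjesFunction ℝ := fun i => ProbabilityTheory.cdf (p i) with hK
    have hKx : ∀ i x, K i x = (p i (Iic x)).toReal := fun i x =>
      (ProbabilityTheory.cdf_eq_real _ _).trans rfl
    have key : ∀ a b : ℝ, a ≤ b → F b - F a ≤ ∑ i, (K i b - K i a) := by
      intro a b hab
      have hFa : F a = (ψ p (Iic a)).toReal := (ProbabilityTheory.cdf_eq_real _ _).trans rfl
      have hFb : F b = (ψ p (Iic b)).toReal := (ProbabilityTheory.cdf_eq_real _ _).trans rfl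
      have hPQ : ∀ i, (p i (Iic a)).toReal ≤ (p i (Iic b)).toReal := fun i =>
        ENNReal.toReal_mono (measure_ne_top _ _)
          (measure_mono (Set.Iic_subset_Iic.2 hab))
      have hcongr : (Finset.univ : Finset (Fin n)).powerset.fold max 0
            (fun S => min (f S b) (S.fold min 1 (fun i => (p i (Iic b)).toReal)))
          = (Finset.univ : Finset (Fin n)).powerset.fold max 0
            (fun S => min (f S a) (S.fold min 1 (fun i => (p i (Iic b)).toReal))) :=
        Finset.fold_congr (fun S _ => by
          obtain ⟨cS, hcS⟩ := hconst S; rw [hcS, hcS])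
      have hinc := maxmin_increment (fun S => f S a)
        (fun i => (p i (Iic a)).toReal) (fun i => (p i (Iic b)).toReal) hPQ
      have hmain : F b ≤ F a + ∑ i, ((p i (Iic b)).toReal - (p i (Iic a)).toReal) := by
        rw [hFa, hFb, hrep p hp a, hrep p hp b, hcongr]
        exact hinc
      have hsum_eq : ∑ i, (K i b - K i a)
          = ∑ i, ((p i (Iic b)).toReal - (p i (Iic a)).toReal) :=
        Finset.sum_congr rfl (fun i _ => by rw [hKx, hKx])
      rw [hsum_eq]
      linarith
    set G : StieltjesFunction ℝ :=
      { toFun := fun x => (∑ i, K i x) - F x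
        mono' := fun a b hab => by
          have h1 := key a b hab
          have h2 : ∑ i, (K i b - K i a) = (∑ i, K i b) - ∑ i, K i a :=
            Finset.sum_sub_distrib _ _
          dsimp only
          linarith
        right_continuous' := fun x => by
          exact ContinuousWithinAt.sub
            (tendsto_finset_sum _ (fun i _ => (K i).right_continuous x))
            (F.right_continuous x) } with hG
    have hFG : F + G = ∑ i, K i := by
      ext x
      rw [StieltjesFunction.add_apply, stieltjes_sum_apply]
      show F x + ((∑ i, K i x) - F x) = ∑ i, K i x
      ring
    have hFm : F.measure = ψ p := ProbabilityTheory.measure_cdf _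
    have hKm : ∀ i, (K i).measure = p i := fun i => ProbabilityTheory.measure_cdf _
    have hcompl : ψ p Aᶜ = 0 := by
      have hle : F.measure Aᶜ ≤ (F + G).measure Aᶜ := by
        rw [StieltjesFunction.measure_add, Measure.add_apply]
        exact le_self_add
      have h2 : (F + G).measure Aᶜ = 0 := by
        rw [hFG, stieltjes_measure_sum, Measure.finset_sum_apply]
        refine Finset.sum_eq_zero (fun i _ => ?_)
        rw [hKm i]
        exact (prob_compl_eq_zero_iff hA).2 (hpA i)
      rw [← hFm]
      exact le_antisymm (hle.trans h2.le) zero_le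
    exact (prob_compl_eq_zero_iff hA).1 hcompl
end

section
/- A probability aggregation function that is level-strategyproof and independent must be dictatorial: there exists a voter i such that ψ(p) = p_i for all profiles p (assuming Λ has at least 3 elements). -/
open Set MeasureTheory
open scoped Classical

/-- Two-point mixture: mass `t` at `a`, mass `1-t` at `b`. -/
noncomputable def mixM (t a b : ℝ) : Measure ℝ :=
  ENNReal.ofReal t • Measure.dirac a + ENNReal.ofReal (1 - t) • Measure.dirac b

lemma mixM_apply (t a b : ℝ) (A : Set ℝ) :
    mixM t a b A = ENNReal.ofReal t * Measure.dirac a A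
      + ENNReal.ofReal (1 - t) * Measure.dirac b A := by
  simp [mixM]

lemma mixM_prob (t a b : ℝ) (h0 : 0 ≤ t) (h1 : t ≤ 1) :
    IsProbabilityMeasure (mixM t a b) := by
  constructor
  rw [mixM_apply]
  simp only [measure_univ, mul_one]
  rw [← ENNReal.ofReal_add h0 (by linarith)]
  norm_num

lemma mixM_toReal (t a b : ℝ) (h0 : 0 ≤ t) (h1 : t ≤ 1) (A : Set ℝ) :
    (mixM t a b A).toReal
      = t * (if a ∈ A then 1 else 0) + (1 - t) * (if b ∈ A then 1 else 0) := by
  rw [mixM_apply, Measure.dirac_apply, Measure.dirac_apply]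
  by_cases ha : a ∈ A <;> by_cases hb : b ∈ A <;>
    simp [ha, hb, Set.indicator_of_mem, Set.indicator_of_notMem,
      ENNReal.toReal_add, ENNReal.ofReal_ne_top, ENNReal.toReal_ofReal, h0,
      sub_nonneg.mpr h1]

/-- Profile where voter `i` reports `μ` and everyone else reports `ν`. -/
noncomputable def profM {n : ℕ} (i : Fin n) (μ ν : Measure ℝ) : Fin n → Measure ℝ :=
  fun j => if j = i then μ else ν

lemma profM_prob {n : ℕ} (i : Fin n) {μ ν : Measure ℝ}
    (hμ : IsProbabilityMeasure μ) (hν : IsProbabilityMeasure ν) :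
    ∀ j, IsProbabilityMeasure (profM i μ ν j) := by
  intro j; unfold profM; split <;> assumption

lemma profM_off {n : ℕ} (i : Fin n) (μ μ' ν : Measure ℝ) :
    ∀ j, j ≠ i → profM i μ' ν j = profM i μ ν j := by
  intro j hj; simp [profM, hj]

lemma profM_toReal {n : ℕ} (i j : Fin n) (μ ν : Measure ℝ) (A : Set ℝ) :
    ((profM i μ ν j) A).toReal = if j = i then (μ A).toReal else (ν A).toReal := by
  unfold profM; split <;> rfl

/-- A probability aggregation function that is level-strategyproof and independent
must be dictatorial: some voter `i` satisfies `ψ p = p i` for all probability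
profiles `p`. (Here `Λ = ℝ`, which has more than 3 elements.) -/
theorem levelSP_independent_implies_dictatorial
    (n : ℕ) (hn : 0 < n)
    (ψ : (Fin n → Measure ℝ) → Measure ℝ)
    (hprob : ∀ p : Fin n → Measure ℝ, (∀ i, IsProbabilityMeasure (p i)) →
      IsProbabilityMeasure (ψ p))
    -- independence: the output probability of every Borel set depends only on the
    -- input probabilities of that set
    (hind : ∃ g : (Fin n → ℝ) → ℝ,
      ∀ p : Fin n → Measure ℝ, (∀ i, IsProbabilityMeasure (p i)) →
        ∀ A : Set ℝ, MeasurableSet A →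
          (ψ p A).toReal = g (fun i => (p i A).toReal))
    -- level-strategyproofness: threshold-wise uncompromisingness of the CDFs
    (hSP : ∀ (a : ℝ) (i : Fin n) (p p' : Fin n → Measure ℝ),
      (∀ j, IsProbabilityMeasure (p j)) → (∀ j, IsProbabilityMeasure (p' j)) →
      (∀ j, j ≠ i → p' j = p j) →
      ((p i (Iic a)).toReal < (ψ p (Iic a)).toReal →
        (ψ p (Iic a)).toReal ≤ (ψ p' (Iic a)).toReal) ∧
      ((p i (Iic a)).toReal > (ψ p (Iic a)).toReal →
        (ψ p (Iic a)).toReal ≥ (ψ p' (Iic a)).toReal)) :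
    ∃ i : Fin n, ∀ p : Fin n → Measure ℝ,
      (∀ j, IsProbabilityMeasure (p j)) → ψ p = p i := by
  classical
  obtain ⟨g, hg⟩ := hind
  -- basic probability measures we use
  have hD0 : IsProbabilityMeasure (mixM 1 0 0) := mixM_prob _ _ _ (by norm_num) le_rfl
  have hD2 : IsProbabilityMeasure (mixM 1 2 2) := mixM_prob _ _ _ (by norm_num) le_rfl
  have hhalf : IsProbabilityMeasure (mixM (1/2) 0 2) := mixM_prob _ _ _ (by norm_num) (by norm_num)
  have hhalf01 : IsProbabilityMeasure (mixM (1/2) 0 1) := mixM_prob _ _ _ (by norm_num) (by norm_num)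
  -- generic facts about ψ
  have compl_eq : ∀ p : Fin n → Measure ℝ, (∀ j, IsProbabilityMeasure (p j)) →
      ∀ A : Set ℝ, MeasurableSet A → (ψ p Aᶜ).toReal = 1 - (ψ p A).toReal := by
    intro p hp A hA
    haveI := hprob p hp
    have h := measure_add_measure_compl (μ := ψ p) hA
    rw [measure_univ] at h
    have h2 := congrArg ENNReal.toReal h
    rw [ENNReal.toReal_add (measure_ne_top _ _) (measure_ne_top _ _)] at h2
    simp only [ENNReal.toReal_one] at h2
    linarith
  have union_eq : ∀ p : Fin n → Measure ℝ, (∀ j, IsProbabilityMeasure (p j)) →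
      ∀ A B : Set ℝ, MeasurableSet B → Disjoint A B →
      (ψ p (A ∪ B)).toReal = (ψ p A).toReal + (ψ p B).toReal := by
    intro p hp A B hB hd
    haveI := hprob p hp
    rw [measure_union hd hB, ENNReal.toReal_add (measure_ne_top _ _) (measure_ne_top _ _)]
  have mono_eq : ∀ p : Fin n → Measure ℝ, (∀ j, IsProbabilityMeasure (p j)) →
      ∀ A B : Set ℝ, A ⊆ B → (ψ p A).toReal ≤ (ψ p B).toReal := by
    intro p hp A B hAB
    haveI := hprob p hp
    exact ENNReal.toReal_mono (measure_ne_top _ _) (measure_mono hAB)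
  -- g of the all-ones vector is 1
  have g1 : g (fun _ : Fin n => (1:ℝ)) = 1 := by
    have hp : ∀ j : Fin n, IsProbabilityMeasure ((fun _ : Fin n => mixM 1 0 0) j) := fun _ => hD0
    have key := hg (fun _ => mixM 1 0 0) hp univ MeasurableSet.univ
    haveI := hprob _ hp
    rw [measure_univ] at key
    simp only [ENNReal.toReal_one] at key
    have hv : (fun _ : Fin n => ((mixM 1 0 0) univ).toReal) = fun _ : Fin n => (1:ℝ) := by
      funext j
      haveI := hD0
      simp
    rw [hv] at key
    exact key.symm
  -- g of the all-zeros vector is 0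
  have g0 : g (fun _ : Fin n => (0:ℝ)) = 0 := by
    have hp : ∀ j : Fin n, IsProbabilityMeasure ((fun _ : Fin n => mixM 1 0 0) j) := fun _ => hD0
    have key := hg (fun _ => mixM 1 0 0) hp ∅ MeasurableSet.empty
    rw [measure_empty] at key
    simp only [ENNReal.toReal_zero] at key
    have hv : (fun _ : Fin n => ((mixM 1 0 0) ∅).toReal) = fun _ : Fin n => (0:ℝ) := by
      funext j; simp
    rw [hv] at key
    exact key.symm
  -- relation between the Q-type vectors
  have hQrel : ∀ k : Fin n, g (fun j => if j = k then (0:ℝ) else 1)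
      = 1 - g (fun j => if j = k then (1:ℝ) else 0) := by
    intro k
    have hQp := profM_prob k hD2 hD0
    have eQ : (ψ (profM k (mixM 1 2 2) (mixM 1 0 0)) (Iic 1)).toReal
        = g (fun j => if j = k then (0:ℝ) else 1) := by
      rw [hg _ hQp (Iic 1) measurableSet_Iic]
      congr 1
      funext j
      rw [profM_toReal, mixM_toReal _ _ _ (by norm_num) le_rfl,
          mixM_toReal _ _ _ (by norm_num) le_rfl]
      norm_num [mem_Iic]
    have eQc : (ψ (profM k (mixM 1 2 2) (mixM 1 0 0)) (Iic 1)ᶜ).toReal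
        = g (fun j => if j = k then (1:ℝ) else 0) := by
      rw [hg _ hQp _ measurableSet_Iic.compl]
      congr 1
      funext j
      rw [profM_toReal, mixM_toReal _ _ _ (by norm_num) le_rfl,
          mixM_toReal _ _ _ (by norm_num) le_rfl]
      norm_num [mem_compl_iff, mem_Iic]
    have hc := compl_eq _ hQp (Iic 1) measurableSet_Iic
    rw [eQ, eQc] at hc
    linarith
  -- each "weight" g(e_k) is 0 or 1
  have dich : ∀ k : Fin n, g (fun j => if j = k then (1:ℝ) else 0) = 0 ∨
      g (fun j => if j = k then (1:ℝ) else 0) = 1 := by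
    intro k
    have hP := profM_prob k hhalf hD0
    have hQp := profM_prob k hD2 hD0
    have hRp := profM_prob k hhalf01 hD2
    -- ψ-value on the half profile
    have eP : (ψ (profM k (mixM (1/2) 0 2) (mixM 1 0 0)) (Iic 1)).toReal
        = g (fun j => if j = k then (1/2:ℝ) else 1) := by
      rw [hg _ hP (Iic 1) measurableSet_Iic]
      congr 1
      funext j
      rw [profM_toReal, mixM_toReal _ _ _ (by norm_num) (by norm_num),
          mixM_toReal _ _ _ (by norm_num) le_rfl]
      norm_num [mem_Iic]
    have ePc : (ψ (profM k (mixM (1/2) 0 2) (mixM 1 0 0)) (Iic 1)ᶜ).toReal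
        = g (fun j => if j = k then (1/2:ℝ) else 0) := by
      rw [hg _ hP _ measurableSet_Iic.compl]
      congr 1
      funext j
      rw [profM_toReal, mixM_toReal _ _ _ (by norm_num) (by norm_num),
          mixM_toReal _ _ _ (by norm_num) le_rfl]
      norm_num [mem_compl_iff, mem_Iic]
    have hcP := compl_eq _ hP (Iic 1) measurableSet_Iic
    rw [eP, ePc] at hcP
    -- halving profile R
    have eR0 : (ψ (profM k (mixM (1/2) 0 1) (mixM 1 2 2)) {0}).toReal
        = g (fun j => if j = k then (1/2:ℝ) else 0) := by
      rw [hg _ hRp _ (measurableSet_singleton 0)]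
      congr 1
      funext j
      rw [profM_toReal, mixM_toReal _ _ _ (by norm_num) (by norm_num),
          mixM_toReal _ _ _ (by norm_num) le_rfl]
      norm_num [mem_singleton_iff]
    have eR1 : (ψ (profM k (mixM (1/2) 0 1) (mixM 1 2 2)) {1}).toReal
        = g (fun j => if j = k then (1/2:ℝ) else 0) := by
      rw [hg _ hRp _ (measurableSet_singleton 1)]
      congr 1
      funext j
      rw [profM_toReal, mixM_toReal _ _ _ (by norm_num) (by norm_num),
          mixM_toReal _ _ _ (by norm_num) le_rfl]
      norm_num [mem_singleton_iff]
    have eR01 : (ψ (profM k (mixM (1/2) 0 1) (mixM 1 2 2)) ({0} ∪ {1})).toReal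
        = g (fun j => if j = k then (1:ℝ) else 0) := by
      rw [hg _ hRp _ ((measurableSet_singleton 0).union (measurableSet_singleton 1))]
      congr 1
      funext j
      rw [profM_toReal, mixM_toReal _ _ _ (by norm_num) (by norm_num),
          mixM_toReal _ _ _ (by norm_num) le_rfl]
      norm_num [mem_union, mem_singleton_iff]
    have hu := union_eq _ hRp {0} {1} (measurableSet_singleton 1)
      (Set.disjoint_singleton.mpr (by norm_num))
    rw [eR0, eR1, eR01] at hu
    -- nonnegativity facts
    have hs0 : 0 ≤ g (fun j => if j = k then (1/2:ℝ) else 0) := by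
      rw [← eR0]; exact ENNReal.toReal_nonneg
    have hq0 : 0 ≤ g (fun j => if j = k then (0:ℝ) else 1) := by
      have eQ : (ψ (profM k (mixM 1 2 2) (mixM 1 0 0)) (Iic 1)).toReal
          = g (fun j => if j = k then (0:ℝ) else 1) := by
        rw [hg _ hQp (Iic 1) measurableSet_Iic]
        congr 1
        funext j
        rw [profM_toReal, mixM_toReal _ _ _ (by norm_num) le_rfl,
            mixM_toReal _ _ _ (by norm_num) le_rfl]
        norm_num [mem_Iic]
      rw [← eQ]; exact ENNReal.toReal_nonneg
    -- the truthful report of voter k in profile P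
    have hPk : ((profM k (mixM (1/2) 0 2) (mixM 1 0 0)) k (Iic 1)).toReal = 1/2 := by
      rw [profM_toReal, if_pos rfl, mixM_toReal _ _ _ (by norm_num) (by norm_num)]
      norm_num [mem_Iic]
    rcases le_or_gt (ψ (profM k (mixM (1/2) 0 2) (mixM 1 0 0)) (Iic 1)).toReal (1/2) with hle | hlt
    · -- g(e_k) = 1
      right
      rw [eP] at hle
      have := hQrel k
      linarith
    · -- strategyproofness gives g(e_k) = 0
      left
      have hsp := (hSP 1 k (profM k (mixM (1/2) 0 2) (mixM 1 0 0))
        (profM k (mixM 1 2 2) (mixM 1 0 0)) hP hQp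
        (profM_off k (mixM (1/2) 0 2) (mixM 1 2 2) (mixM 1 0 0))).1
        (by rw [hPk]; exact hlt)
      have eQ : (ψ (profM k (mixM 1 2 2) (mixM 1 0 0)) (Iic 1)).toReal
          = g (fun j => if j = k then (0:ℝ) else 1) := by
        rw [hg _ hQp (Iic 1) measurableSet_Iic]
        congr 1
        funext j
        rw [profM_toReal, mixM_toReal _ _ _ (by norm_num) le_rfl,
            mixM_toReal _ _ _ (by norm_num) le_rfl]
        norm_num [mem_Iic]
      rw [eP, eQ] at hsp
      have := hQrel k
      linarith
  -- the weights sum to 1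
  have sum1 : ∑ k : Fin n, g (fun j => if j = k then (1:ℝ) else 0) = 1 := by
    have hS : ∀ j : Fin n,
        IsProbabilityMeasure ((fun m : Fin n => mixM 1 ((m:ℕ):ℝ) ((m:ℕ):ℝ)) j) :=
      fun j => mixM_prob _ _ _ (by norm_num) le_rfl
    haveI := hprob _ hS
    have hmeas : ∀ k ∈ (Finset.univ : Finset (Fin n)),
        MeasurableSet ({((k:ℕ):ℝ)} : Set ℝ) := fun k _ => measurableSet_singleton _
    have hdisj : (↑(Finset.univ : Finset (Fin n)) : Set (Fin n)).PairwiseDisjoint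
        (fun k : Fin n => ({((k:ℕ):ℝ)} : Set ℝ)) := by
      intro a _ b _ hab
      simp only [Function.onFun]
      rw [Set.disjoint_singleton]
      exact fun h => hab (Fin.ext (Nat.cast_injective h))
    have hsum := measure_biUnion_finset
      (μ := ψ (fun m : Fin n => mixM 1 ((m:ℕ):ℝ) ((m:ℕ):ℝ))) hdisj hmeas
    have hBmeas : MeasurableSet (⋃ k ∈ (Finset.univ : Finset (Fin n)),
        ({((k:ℕ):ℝ)} : Set ℝ)) := Finset.measurableSet_biUnion _ hmeas
    have hB := hg _ hS _ hBmeas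
    have hvB : (fun j : Fin n => ((mixM 1 ((j:ℕ):ℝ) ((j:ℕ):ℝ))
        (⋃ k ∈ (Finset.univ : Finset (Fin n)), ({((k:ℕ):ℝ)} : Set ℝ))).toReal)
        = fun _ : Fin n => (1:ℝ) := by
      funext j
      rw [mixM_toReal _ _ _ (by norm_num) le_rfl]
      have hmem : ((j:ℕ):ℝ) ∈ ⋃ k ∈ (Finset.univ : Finset (Fin n)),
          ({((k:ℕ):ℝ)} : Set ℝ) := by
        simp only [Set.mem_iUnion]
        exact ⟨j, Finset.mem_univ j, rfl⟩
      rw [if_pos hmem]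
      norm_num
    rw [hvB, g1] at hB
    have hvk : ∀ k : Fin n,
        (ψ (fun m : Fin n => mixM 1 ((m:ℕ):ℝ) ((m:ℕ):ℝ)) ({((k:ℕ):ℝ)} : Set ℝ)).toReal
        = g (fun j => if j = k then (1:ℝ) else 0) := by
      intro k
      rw [hg _ hS _ (measurableSet_singleton _)]
      congr 1
      funext j
      rw [mixM_toReal _ _ _ (by norm_num) le_rfl]
      by_cases hjk : j = k
      · subst hjk; simp
      · have hne : ((j:ℕ):ℝ) ≠ ((k:ℕ):ℝ) := fun h => hjk (Fin.ext (Nat.cast_injective h))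
        simp [hne, hjk]
    have htr := congrArg ENNReal.toReal hsum
    rw [ENNReal.toReal_sum (fun k _ => measure_ne_top _ _)] at htr
    rw [Finset.sum_congr rfl (fun k _ => hvk k)] at htr
    rw [← htr]
    exact hB
  -- there exists a dictator candidate
  have hex : ∃ i : Fin n, g (fun j => if j = i then (1:ℝ) else 0) = 1 := by
    by_contra hc
    push_neg at hc
    have hz : ∀ k : Fin n, g (fun j => if j = k then (1:ℝ) else 0) = 0 :=
      fun k => (dich k).resolve_right (hc k)
    rw [Finset.sum_congr rfl (fun k _ => hz k)] at sum1
    simp at sum1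
  obtain ⟨i, hwi⟩ := hex
  have hQzero : g (fun j => if j = i then (0:ℝ) else 1) = 0 := by
    rw [hQrel i, hwi]; norm_num
  -- L: g on x·e_i
  have Lval : ∀ x : ℝ, 0 ≤ x → x ≤ 1 → g (fun j => if j = i then x else 0) = x := by
    intro x hx0 hx1
    have hmx : IsProbabilityMeasure (mixM x 0 2) := mixM_prob _ _ _ hx0 hx1
    have hp := profM_prob i hmx hD2
    have hp' := profM_prob i hD0 hD2
    have hp'' := profM_prob i hD2 hD2
    have ep : (ψ (profM i (mixM x 0 2) (mixM 1 2 2)) (Iic 1)).toReal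
        = g (fun j => if j = i then x else 0) := by
      rw [hg _ hp (Iic 1) measurableSet_Iic]
      congr 1
      funext j
      rw [profM_toReal, mixM_toReal _ _ _ hx0 hx1,
          mixM_toReal _ _ _ (by norm_num) le_rfl]
      norm_num [mem_Iic]
    have ep' : (ψ (profM i (mixM 1 0 0) (mixM 1 2 2)) (Iic 1)).toReal
        = g (fun j => if j = i then (1:ℝ) else 0) := by
      rw [hg _ hp' (Iic 1) measurableSet_Iic]
      congr 1
      funext j
      rw [profM_toReal, mixM_toReal _ _ _ (by norm_num) le_rfl,
          mixM_toReal _ _ _ (by norm_num) le_rfl]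
      norm_num [mem_Iic]
    have ep'' : (ψ (profM i (mixM 1 2 2) (mixM 1 2 2)) (Iic 1)).toReal
        = g (fun _ : Fin n => (0:ℝ)) := by
      rw [hg _ hp'' (Iic 1) measurableSet_Iic]
      congr 1
      funext j
      rw [profM_toReal, mixM_toReal _ _ _ (by norm_num) le_rfl]
      norm_num [mem_Iic]
    have hpi : ((profM i (mixM x 0 2) (mixM 1 2 2)) i (Iic 1)).toReal = x := by
      rw [profM_toReal, if_pos rfl, mixM_toReal _ _ _ hx0 hx1]
      norm_num [mem_Iic]
    rcases lt_trichotomy ((ψ (profM i (mixM x 0 2) (mixM 1 2 2)) (Iic 1)).toReal) x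
      with h | h | h
    · exfalso
      have hsp := (hSP 1 i (profM i (mixM x 0 2) (mixM 1 2 2))
        (profM i (mixM 1 0 0) (mixM 1 2 2)) hp hp'
        (profM_off i (mixM x 0 2) (mixM 1 0 0) (mixM 1 2 2))).2
        (by rw [hpi]; exact h)
      rw [ep'] at hsp
      rw [hwi] at hsp
      linarith
    · rw [← ep]; exact h
    · exfalso
      have hsp := (hSP 1 i (profM i (mixM x 0 2) (mixM 1 2 2))
        (profM i (mixM 1 2 2) (mixM 1 2 2)) hp hp''
        (profM_off i (mixM x 0 2) (mixM 1 2 2) (mixM 1 2 2))).1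
        (by rw [hpi]; exact h)
      rw [ep''] at hsp
      rw [g0] at hsp
      linarith
  -- O: g on the vector with x at i and 1 elsewhere
  have Oval : ∀ x : ℝ, 0 ≤ x → x ≤ 1 → g (fun j => if j = i then x else 1) = x := by
    intro x hx0 hx1
    have hmx : IsProbabilityMeasure (mixM x 0 2) := mixM_prob _ _ _ hx0 hx1
    have hp := profM_prob i hmx hD0
    have hp' := profM_prob i hD0 hD0
    have hp'' := profM_prob i hD2 hD0
    have ep : (ψ (profM i (mixM x 0 2) (mixM 1 0 0)) (Iic 1)).toReal
        = g (fun j => if j = i then x else 1) := by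
      rw [hg _ hp (Iic 1) measurableSet_Iic]
      congr 1
      funext j
      rw [profM_toReal, mixM_toReal _ _ _ hx0 hx1,
          mixM_toReal _ _ _ (by norm_num) le_rfl]
      norm_num [mem_Iic]
    have ep' : (ψ (profM i (mixM 1 0 0) (mixM 1 0 0)) (Iic 1)).toReal
        = g (fun _ : Fin n => (1:ℝ)) := by
      rw [hg _ hp' (Iic 1) measurableSet_Iic]
      congr 1
      funext j
      rw [profM_toReal, mixM_toReal _ _ _ (by norm_num) le_rfl]
      norm_num [mem_Iic]
    have ep'' : (ψ (profM i (mixM 1 2 2) (mixM 1 0 0)) (Iic 1)).toReal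
        = g (fun j => if j = i then (0:ℝ) else 1) := by
      rw [hg _ hp'' (Iic 1) measurableSet_Iic]
      congr 1
      funext j
      rw [profM_toReal, mixM_toReal _ _ _ (by norm_num) le_rfl,
          mixM_toReal _ _ _ (by norm_num) le_rfl]
      norm_num [mem_Iic]
    have hpi : ((profM i (mixM x 0 2) (mixM 1 0 0)) i (Iic 1)).toReal = x := by
      rw [profM_toReal, if_pos rfl, mixM_toReal _ _ _ hx0 hx1]
      norm_num [mem_Iic]
    rcases lt_trichotomy ((ψ (profM i (mixM x 0 2) (mixM 1 0 0)) (Iic 1)).toReal) x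
      with h | h | h
    · exfalso
      have hsp := (hSP 1 i (profM i (mixM x 0 2) (mixM 1 0 0))
        (profM i (mixM 1 0 0) (mixM 1 0 0)) hp hp'
        (profM_off i (mixM x 0 2) (mixM 1 0 0) (mixM 1 0 0))).2
        (by rw [hpi]; exact h)
      rw [ep', g1] at hsp
      linarith
    · rw [← ep]; exact h
    · exfalso
      have hsp := (hSP 1 i (profM i (mixM x 0 2) (mixM 1 0 0))
        (profM i (mixM 1 2 2) (mixM 1 0 0)) hp hp''
        (profM_off i (mixM x 0 2) (mixM 1 2 2) (mixM 1 0 0))).1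
        (by rw [hpi]; exact h)
      rw [ep'', hQzero] at hsp
      linarith
  -- conclusion: voter i is a dictator
  refine ⟨i, fun p hp => ?_⟩
  haveI := hprob p hp
  haveI := hp i
  refine Measure.ext fun A hA => ?_
  rw [← ENNReal.toReal_eq_toReal_iff' (measure_ne_top _ _) (measure_ne_top _ _)]
  have key := hg p hp A hA
  set v : Fin n → ℝ := fun j => (p j A).toReal with hvdef
  have key2 : (ψ p A).toReal = g v := by rw [hvdef]; exact key
  have hv0 : ∀ j, 0 ≤ v j := fun j => ENNReal.toReal_nonneg
  have hv1 : ∀ j, v j ≤ 1 := by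
    intro j
    haveI := hp j
    have h := ENNReal.toReal_mono (ENNReal.one_ne_top) (prob_le_one (μ := p j) (s := A))
    simpa using h
  -- upper bound profile T
  set T : Fin n → Measure ℝ :=
    fun j => if j = i then mixM (v i) 0 2 else mixM (v j) 0 1 with hTdef
  have hT : ∀ j, IsProbabilityMeasure (T j) := by
    intro j
    rw [hTdef]
    dsimp only
    split_ifs
    · exact mixM_prob _ _ _ (hv0 i) (hv1 i)
    · exact mixM_prob _ _ _ (hv0 j) (hv1 j)
  have eT0 : (ψ T {0}).toReal = g v := by
    rw [hg T hT {0} (measurableSet_singleton 0)]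
    congr 1
    funext j
    rw [hTdef]
    dsimp only
    split_ifs with h
    · subst h
      rw [mixM_toReal _ _ _ (hv0 j) (hv1 j)]
      norm_num [mem_singleton_iff]
    · rw [mixM_toReal _ _ _ (hv0 j) (hv1 j)]
      norm_num [mem_singleton_iff]
  have eT01 : (ψ T ({0} ∪ {1})).toReal = g (fun j => if j = i then (v i) else 1) := by
    rw [hg T hT _ ((measurableSet_singleton 0).union (measurableSet_singleton 1))]
    congr 1
    funext j
    rw [hTdef]
    dsimp only
    split_ifs with h
    · rw [mixM_toReal _ _ _ (hv0 i) (hv1 i)]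
      norm_num [mem_union, mem_singleton_iff]
    · rw [mixM_toReal _ _ _ (hv0 j) (hv1 j)]
      norm_num [mem_union, mem_singleton_iff]
  have hub : g v ≤ v i := by
    have hm := mono_eq T hT {0} ({0} ∪ {1}) subset_union_left
    rw [eT0, eT01, Oval (v i) (hv0 i) (hv1 i)] at hm
    exact hm
  -- lower bound profile T'
  set T' : Fin n → Measure ℝ :=
    fun j => if j = i then mixM (v i) 0 2 else mixM (v j) 1 2 with hT'def
  have hT' : ∀ j, IsProbabilityMeasure (T' j) := by
    intro j
    rw [hT'def]
    dsimp only
    split_ifs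
    · exact mixM_prob _ _ _ (hv0 i) (hv1 i)
    · exact mixM_prob _ _ _ (hv0 j) (hv1 j)
  have eT'0 : (ψ T' {0}).toReal = g (fun j => if j = i then (v i) else 0) := by
    rw [hg T' hT' {0} (measurableSet_singleton 0)]
    congr 1
    funext j
    rw [hT'def]
    dsimp only
    split_ifs with h
    · rw [mixM_toReal _ _ _ (hv0 i) (hv1 i)]
      norm_num [mem_singleton_iff]
    · rw [mixM_toReal _ _ _ (hv0 j) (hv1 j)]
      norm_num [mem_singleton_iff]
  have eT'01 : (ψ T' ({0} ∪ {1})).toReal = g v := by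
    rw [hg T' hT' _ ((measurableSet_singleton 0).union (measurableSet_singleton 1))]
    congr 1
    funext j
    rw [hT'def]
    dsimp only
    split_ifs with h
    · subst h
      rw [mixM_toReal _ _ _ (hv0 j) (hv1 j)]
      norm_num [mem_union, mem_singleton_iff]
    · rw [mixM_toReal _ _ _ (hv0 j) (hv1 j)]
      norm_num [mem_union, mem_singleton_iff]
  have hlb : v i ≤ g v := by
    have hm := mono_eq T' hT' {0} ({0} ∪ {1}) subset_union_left
    rw [eT'0, eT'01, Lval (v i) (hv0 i) (hv1 i)] at hm
    exact hm
  rw [key2]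
  exact le_antisymm hub hlb
end

section
/- A weighted average PAF ψ(p_1,…,p_n) = Σ_i w_i p_i with weights w_i ≥ 0 summing to 1 is level-strategyproof if and only if some w_i = 1 (i.e., ψ is dictatorial). -/
open Set Finset Filter Topology

/-- A simple continuous ramp CDF: 0 before `c`, rising linearly to 1 at `c+1`. -/
noncomputable def Fcdf (c : ℝ) : ℝ → ℝ := fun x => max 0 (min 1 (x - c))

lemma isCDF_Fcdf (c : ℝ) : IsCDF (Fcdf c) := by
  refine ⟨?_, ?_, ?_, ?_⟩
  · intro x y hxy
    unfold Fcdf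
    exact max_le_max le_rfl (min_le_min le_rfl (by linarith))
  · intro a
    exact (continuous_const.max (continuous_const.min
      (continuous_id.sub continuous_const))).continuousWithinAt
  · have h : (fun _ : ℝ => (1:ℝ)) =ᶠ[atTop] Fcdf c := by
      filter_upwards [eventually_ge_atTop (c + 1)] with x hx
      unfold Fcdf
      rw [min_eq_left (by linarith), max_eq_right (by linarith)]
    exact Tendsto.congr' h tendsto_const_nhds
  · have h : (fun _ : ℝ => (0:ℝ)) =ᶠ[atBot] Fcdf c := by
      filter_upwards [eventually_le_atBot c] with x hx
      unfold Fcdf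
      rw [max_eq_left (le_trans (min_le_right _ _) (by linarith))]
    exact Tendsto.congr' h tendsto_const_nhds

lemma Fcdf_one : Fcdf (-1) 0 = 1 := by norm_num [Fcdf]
lemma Fcdf_half : Fcdf (-(1/2)) 0 = 1/2 := by norm_num [Fcdf]
lemma Fcdf_zero : Fcdf 1 0 = 0 := by norm_num [Fcdf]

/-- The weighted average PAF `ψ(p) = Σ_i w_i p_i` (expressed on the cumulatives as
`Ψ(P)(a) = Σ_i w_i P_i(a)`) is level-strategyproof iff some weight equals `1`,
i.e. iff it is dictatorial. There are `n ≥ 2` voters. -/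
theorem weighted_average_levelSP_iff_dictatorial
    (n : ℕ) (hn : 2 ≤ n) (w : Fin n → ℝ)
    (hw : ∀ i, 0 ≤ w i) (hsum : ∑ i, w i = 1) :
    (∀ (a : ℝ) (i : Fin n) (P P' : Fin n → (ℝ → ℝ)),
      (∀ j, IsCDF (P j)) → (∀ j, IsCDF (P' j)) → (∀ j, j ≠ i → P' j = P j) →
      (P i a < ∑ j, w j * P j a → (∑ j, w j * P j a) ≤ ∑ j, w j * P' j a) ∧
      (P i a > ∑ j, w j * P j a → (∑ j, w j * P j a) ≥ ∑ j, w j * P' j a))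
    ↔ (∃ i, w i = 1) := by
  constructor
  · intro h
    by_contra hno
    push_neg at hno
    have hex : ∃ i, 0 < w i := by
      by_contra h0
      push_neg at h0
      have hz : ∀ i ∈ Finset.univ, w i = 0 := fun i _ => le_antisymm (h0 i) (hw i)
      rw [Finset.sum_eq_zero hz] at hsum
      norm_num at hsum
    obtain ⟨i, hi⟩ := hex
    have hle : w i ≤ 1 := by
      have := Finset.single_le_sum (fun j _ => hw j) (Finset.mem_univ i)
      linarith [this.trans_eq hsum]
    have hi1 : w i < 1 := lt_of_le_of_ne hle (hno i)
    set P : Fin n → ℝ → ℝ := fun j => if j = i then Fcdf (-(1/2)) else Fcdf (-1) with hP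
    set P' : Fin n → ℝ → ℝ := fun j => if j = i then Fcdf 1 else Fcdf (-1) with hP'
    have hPc : ∀ j, IsCDF (P j) := by
      intro j; simp only [hP]; split <;> exact isCDF_Fcdf _
    have hP'c : ∀ j, IsCDF (P' j) := by
      intro j; simp only [hP']; split <;> exact isCDF_Fcdf _
    have hagree : ∀ j, j ≠ i → P' j = P j := by
      intro j hj; simp [hP, hP', hj]
    have key := h 0 i P P' hPc hP'c hagree
    have hS : ∑ j, w j * P j 0 = 1 - w i / 2 := by
      have : ∀ j ∈ Finset.univ, w j * P j 0 = w j - (if j = i then w i / 2 else 0) := by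
        intro j _
        by_cases hj : j = i
        · subst hj; simp only [hP, if_pos rfl, Fcdf_half, eq_self_iff_true, if_true]; ring
        · simp only [hP, if_neg hj, Fcdf_one, mul_one, sub_zero]
      rw [Finset.sum_congr rfl this, Finset.sum_sub_distrib, hsum,
        Finset.sum_ite_eq' Finset.univ i, if_pos (Finset.mem_univ i)]
    have hS' : ∑ j, w j * P' j 0 = 1 - w i := by
      have : ∀ j ∈ Finset.univ, w j * P' j 0 = w j - (if j = i then w i else 0) := by
        intro j _
        by_cases hj : j = i
        · subst hj; simp only [hP', if_pos rfl, Fcdf_zero, eq_self_iff_true, if_true]; ring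
        · simp only [hP', if_neg hj, Fcdf_one, mul_one, sub_zero]
      rw [Finset.sum_congr rfl this, Finset.sum_sub_distrib, hsum,
        Finset.sum_ite_eq' Finset.univ i, if_pos (Finset.mem_univ i)]
    have hlt : P i 0 < ∑ j, w j * P j 0 := by
      rw [hS]
      simp only [hP, if_pos rfl, Fcdf_half]
      linarith
    have := key.1 hlt
    rw [hS, hS'] at this
    linarith
  · rintro ⟨d, hd⟩ a i P P' hPc hP'c hagree
    have hz : ∀ k, k ≠ d → w k = 0 := by
      intro k hk
      by_contra h0
      have hk' : 0 < w k := lt_of_le_of_ne (hw k) (Ne.symm h0)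
      have hsub : ({d, k} : Finset (Fin n)) ⊆ Finset.univ := Finset.subset_univ _
      have h2 : w d + w k ≤ ∑ j, w j := by
        rw [← Finset.sum_pair (Ne.symm hk)]
        exact Finset.sum_le_sum_of_subset_of_nonneg hsub (fun j _ _ => hw j)
      rw [hsum] at h2
      linarith
    have hsum_eq : ∀ (Q : Fin n → ℝ → ℝ), ∑ j, w j * Q j a = Q d a := by
      intro Q
      have : ∀ j ∈ Finset.univ, w j * Q j a = (if j = d then Q d a else 0) := by
        intro j _
        by_cases hj : j = d
        · subst hj; rw [hd, one_mul, if_pos rfl]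
        · rw [hz j hj, zero_mul, if_neg hj]
      rw [Finset.sum_congr rfl this, Finset.sum_ite_eq' Finset.univ d,
        if_pos (Finset.mem_univ d)]
    by_cases hdi : d = i
    · subst hdi
      constructor
      · intro hlt
        rw [hsum_eq P] at hlt
        exact absurd hlt (lt_irrefl _)
      · intro hgt
        rw [hsum_eq P] at hgt
        exact absurd hgt (lt_irrefl _)
    · have hPd : P' d = P d := hagree d hdi
      have heq : ∑ j, w j * P' j a = ∑ j, w j * P j a := by
        rw [hsum_eq P, hsum_eq P', hPd]
      constructor
      · intro _; rw [heq]
      · intro _; rw [heq]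
end

section
/- Let g(r_1,…,r_n) = max_{S⊆N} min(β_S, min_{i∈S} r_i) be a one-dimensional strategyproof voting rule whose coalition phantoms β_S all lie in {0,1}, with β_∅ = 0 and β_N = 1. Then the output of g is always one of its inputs: g(r) ∈ {r_1,…,r_n} for every r ∈ [0,1]^N. -/
open Set Finset

private lemma fold_max_eq_sup' {α : Type*} (s : Finset α) (h : s.Nonempty)
    (b : ℝ) (f : α → ℝ) : s.fold max b f = max b (s.sup' h f) := by
  induction h using Finset.Nonempty.cons_induction with
  | singleton a => simp [Finset.fold_singleton, max_comm]
  | cons a s ha hs ih =>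
      rw [Finset.fold_cons, ih, Finset.sup'_cons]
      rw [max_left_comm]

private lemma fold_min_eq_inf' {α : Type*} (s : Finset α) (h : s.Nonempty)
    (b : ℝ) (f : α → ℝ) : s.fold min b f = min b (s.inf' h f) := by
  induction h using Finset.Nonempty.cons_induction with
  | singleton a => simp [Finset.fold_singleton, min_comm]
  | cons a s ha hs ih =>
      rw [Finset.fold_cons, ih, Finset.inf'_cons]
      rw [min_left_comm]

/-- If all coalition phantoms of a max-min (one-SP) voting rule lie in `{0,1}`, with
`β ∅ = 0` and `β N = 1`, then the output of the rule is always one of its inputs. -/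
theorem zero_one_phantoms_output_is_an_input
    (n : ℕ) (hn : 0 < n) (β : Finset (Fin n) → ℝ)
    (h01 : ∀ S, β S = 0 ∨ β S = 1)
    (hempty : β (∅ : Finset (Fin n)) = 0)
    (hfull : β (Finset.univ : Finset (Fin n)) = 1)
    (hmono : ∀ S S' : Finset (Fin n), S ⊆ S' → β S ≤ β S')
    (g : (Fin n → ℝ) → ℝ)
    (hg : ∀ r : Fin n → ℝ,
      g r = (Finset.univ : Finset (Fin n)).powerset.fold max 0
              (fun S => min (β S) (S.fold min 1 r))) :
    ∀ r : Fin n → ℝ, (∀ i, r i ∈ Icc (0:ℝ) 1) → ∃ i, g r = r i := by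
  intro r hr
  have : Nonempty (Fin n) := ⟨⟨0, hn⟩⟩
  set F : Finset (Fin n) → ℝ := fun S => min (β S) (S.fold min 1 r) with hF
  set T := (Finset.univ : Finset (Fin n)).powerset with hT
  have hTne : T.Nonempty := ⟨∅, by simp [hT]⟩
  have hgr : g r = max 0 (T.sup' hTne F) := by
    rw [hg r, fold_max_eq_sup' T hTne 0 F]
  obtain ⟨S₀, hS₀T, hS₀⟩ := Finset.exists_mem_eq_sup' hTne F
  -- value of F on a nonempty S with β S = 1 is r at the minimizer
  have hFval : ∀ (S : Finset (Fin n)) (hS : S.Nonempty), β S = 1 →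
      ∃ i ∈ S, F S = r i := by
    intro S hS hβ
    obtain ⟨i, hiS, hi⟩ := Finset.exists_mem_eq_inf' hS r
    refine ⟨i, hiS, ?_⟩
    show min (β S) (S.fold min 1 r) = r i
    rw [hβ, fold_min_eq_inf' S hS 1 r, hi, min_eq_right (hr i).2,
      min_eq_right (hr i).2]
  -- F univ = r j for some j, and r j ≥ 0
  have huniv : (Finset.univ : Finset (Fin n)).Nonempty := Finset.univ_nonempty
  obtain ⟨j, _, hj⟩ := hFval Finset.univ huniv hfull
  have hjle : r j ≤ T.sup' hTne F := by
    rw [← hj]; exact Finset.le_sup' F (by simp [hT])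
  rcases le_or_gt (T.sup' hTne F) 0 with hle | hlt
  · -- max is 0; then r j ≤ 0 and r j ≥ 0, so g r = 0 = r j
    have hj0 : r j = 0 := le_antisymm (hjle.trans hle) (hr j).1
    exact ⟨j, by rw [hgr, max_eq_left hle, hj0]⟩
  · -- max > 0, attained at S₀ with β S₀ = 1 and S₀ nonempty
    have hpos : (0:ℝ) < F S₀ := hS₀ ▸ hlt
    have hβ1 : β S₀ = 1 := by
      rcases h01 S₀ with h0 | h1
      · exfalso; have : F S₀ ≤ 0 := by simp [hF, h0]
        linarith
      · exact h1
    have hS₀ne : S₀.Nonempty := by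
      rcases S₀.eq_empty_or_nonempty with h | h
      · exfalso; rw [h] at hβ1; rw [hempty] at hβ1; norm_num at hβ1
      · exact h
    obtain ⟨i, hiS, hi⟩ := hFval S₀ hS₀ne hβ1
    exact ⟨i, by rw [hgr, max_eq_right hlt.le, hS₀, hi]⟩
end

section
/- If Ψ : C^N → C is level-strategyproof with constant phantoms all in {0,1} (equivalently, Ψ applies a voting rule g pointwise whose output is always one of its inputs and which depends only on the ordering of the inputs), then for any dominated profile P (i.e., for all i,j either P_i ≤ P_j pointwise or P_j ≤ P_i pointwise) there exists a single voter i such that Ψ(P) = P_i. -/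
open Set Finset

/-- If `Ψ` applies pointwise a max-min voting rule whose coalition phantoms are all in
`{0,1}` (with `β ∅ = 0`, `β N = 1`, `β` monotone), then on any dominated profile
(CDFs totally ordered under the pointwise order) the output is one of the inputs:
there is a single voter `i` with `Ψ(P) = P i`. -/
theorem zero_one_phantoms_dominated_profile_output_is_one_input
    {Λ : Type*} (n : ℕ) (hn : 0 < n) (β : Finset (Fin n) → ℝ)
    (h01 : ∀ S, β S = 0 ∨ β S = 1)
    (hempty : β (∅ : Finset (Fin n)) = 0)
    (hfull : β (Finset.univ : Finset (Fin n)) = 1)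
    (hmono : ∀ S S' : Finset (Fin n), S ⊆ S' → β S ≤ β S')
    (Ψ : (Fin n → (Λ → ℝ)) → (Λ → ℝ))
    (hΨ : ∀ (P : Fin n → (Λ → ℝ)) (a : Λ),
      Ψ P a = (Finset.univ : Finset (Fin n)).powerset.fold max 0
                (fun S => min (β S) (S.fold min 1 (fun i => P i a)))) :
    ∀ P : Fin n → (Λ → ℝ),
      (∀ i a, P i a ∈ Icc (0:ℝ) 1) →
      (∀ i j : Fin n, (∀ a, P i a ≤ P j a) ∨ (∀ a, P j a ≤ P i a)) →
      ∃ i : Fin n, ∀ a, Ψ P a = P i a := by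

  intro P hP hdom
  classical
  -- every nonempty finset of voters has a pointwise-minimal member
  have hmin : ∀ S : Finset (Fin n), S.Nonempty →
      ∃ i ∈ S, ∀ j ∈ S, ∀ x, P i x ≤ P j x := by
    intro S hS
    induction hS using Finset.Nonempty.cons_induction with
    | singleton a => exact ⟨a, Finset.mem_singleton_self a, by
        intro j hj x; rw [Finset.mem_singleton] at hj; subst hj; exact le_rfl⟩
    | cons a s ha hs ih =>
      obtain ⟨i, hi, hmi⟩ := ih
      rcases hdom a i with h | h
      · refine ⟨a, Finset.mem_cons_self a s, ?_⟩
        intro j hj x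
        rcases Finset.mem_cons.mp hj with rfl | hj
        · exact le_rfl
        · exact le_trans (h x) (hmi j hj x)
      · refine ⟨i, Finset.mem_cons.mpr (Or.inr hi), ?_⟩
        intro j hj x
        rcases Finset.mem_cons.mp hj with rfl | hj
        · exact h x
        · exact hmi j hj x
  have hmax : ∀ S : Finset (Fin n), S.Nonempty →
      ∃ i ∈ S, ∀ j ∈ S, ∀ x, P j x ≤ P i x := by
    intro S hS
    induction hS using Finset.Nonempty.cons_induction with
    | singleton a => exact ⟨a, Finset.mem_singleton_self a, by
        intro j hj x; rw [Finset.mem_singleton] at hj; subst hj; exact le_rfl⟩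
    | cons a s ha hs ih =>
      obtain ⟨i, hi, hmi⟩ := ih
      rcases hdom a i with h | h
      · refine ⟨i, Finset.mem_cons.mpr (Or.inr hi), ?_⟩
        intro j hj x
        rcases Finset.mem_cons.mp hj with rfl | hj
        · exact h x
        · exact hmi j hj x
      · refine ⟨a, Finset.mem_cons_self a s, ?_⟩
        intro j hj x
        rcases Finset.mem_cons.mp hj with rfl | hj
        · exact le_rfl
        · exact le_trans (hmi j hj x) (h x)
  set F := (Finset.univ.powerset : Finset (Finset (Fin n))).filter
      (fun S => β S = 1) with hF
  have hunivF : (Finset.univ : Finset (Fin n)) ∈ F := by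
    simp [hF, hfull]
  have hne : ∀ S ∈ F, S.Nonempty := by
    intro S hS
    rcases Finset.eq_empty_or_nonempty S with rfl | h
    · have := (Finset.mem_filter.mp hS).2
      rw [hempty] at this; norm_num at this
    · exact h
  let m : Finset (Fin n) → Fin n := fun S =>
    if h : S.Nonempty then (hmin S h).choose else ⟨0, hn⟩
  have hm_mem : ∀ S (h : S.Nonempty), m S ∈ S := by
    intro S h
    simp only [m, dif_pos h]
    exact (hmin S h).choose_spec.1
  have hm_min : ∀ S (h : S.Nonempty), ∀ j ∈ S, ∀ x, P (m S) x ≤ P j x := by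
    intro S h
    simp only [m, dif_pos h]
    exact (hmin S h).choose_spec.2
  have hVne : (F.image m).Nonempty := ⟨m Finset.univ, Finset.mem_image_of_mem m hunivF⟩
  obtain ⟨i, hiV, himax⟩ := hmax (F.image m) hVne
  obtain ⟨S0, hS0F, hS0i⟩ := Finset.mem_image.mp hiV
  refine ⟨i, fun x => ?_⟩
  rw [hΨ]
  have hS0ne := hne S0 hS0F
  have hβS0 : β S0 = 1 := (Finset.mem_filter.mp hS0F).2
  have hiS0 : i ∈ S0 := hS0i ▸ hm_mem S0 hS0ne
  have hfoldS0 : S0.fold min 1 (fun j => P j x) = P i x := by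
    apply le_antisymm
    · exact (Finset.fold_min_le _).mpr (Or.inr ⟨i, hiS0, le_rfl⟩)
    · refine (Finset.le_fold_min _).mpr ⟨(hP i x).2, fun j hj => ?_⟩
      rw [← hS0i]
      exact hm_min S0 hS0ne j hj x
  apply le_antisymm
  · apply (Finset.fold_max_le _).mpr
    refine ⟨(hP i x).1, fun S _ => ?_⟩
    rcases h01 S with h0 | h1
    · calc min (β S) (S.fold min 1 fun j => P j x) ≤ β S := min_le_left _ _
        _ = 0 := h0
        _ ≤ P i x := (hP i x).1
    · have SF : S ∈ F := Finset.mem_filter.mpr ⟨by simp, h1⟩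
      have hSne := hne S SF
      have h2 : S.fold min 1 (fun j => P j x) ≤ P (m S) x :=
        (Finset.fold_min_le _).mpr (Or.inr ⟨m S, hm_mem S hSne, le_rfl⟩)
      have h3 : P (m S) x ≤ P i x := himax (m S) (Finset.mem_image_of_mem m SF) x
      exact le_trans (min_le_right _ _) (le_trans h2 h3)
  · apply (Finset.le_fold_max _).mpr
    right
    refine ⟨S0, by simp, ?_⟩
    rw [hβS0, hfoldS0]
    exact le_min (hP i x).2 le_rfl
end

section
/- Define μ_w(r_1,…,r_n) = sup{ y ∈ [0,1] : Σ_{i : r_i ≥ y} w_i ≥ y } for weights w_i ≥ 0 with Σ w_i = 1. Then μ_w is uncompromising (one-dimensional strategyproof) and unanimous. -/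
open Set Finset

/-- The weighted uniform-median rule
`μ_w(r) = sup { y ∈ [0,1] : Σ_{i : r_i ≥ y} w_i ≥ y }` is uncompromising
(one-dimensional strategyproof) and unanimous. -/
theorem weighted_uniform_median_uncompromising_unanimous
    (n : ℕ) (w : Fin n → ℝ) (hw : ∀ i, 0 ≤ w i) (hsum : ∑ i, w i = 1)
    (μ : (Fin n → ℝ) → ℝ)
    (hμ : ∀ r : Fin n → ℝ,
      μ r = sSup {y : ℝ | y ∈ Icc (0:ℝ) 1 ∧
              y ≤ ∑ i ∈ Finset.univ.filter (fun i => y ≤ r i), w i}) :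
    -- uncompromisingness
    (∀ (i : Fin n) (r r' : Fin n → ℝ),
      (∀ j, r j ∈ Icc (0:ℝ) 1) → (∀ j, r' j ∈ Icc (0:ℝ) 1) →
      (∀ j, j ≠ i → r' j = r j) →
      (r i < μ r → μ r ≤ μ r') ∧ (r i > μ r → μ r ≥ μ r')) ∧
    -- unanimity
    (∀ x ∈ Icc (0:ℝ) 1, μ (fun _ => x) = x) := by
  set S : (Fin n → ℝ) → Set ℝ := fun r =>
    {y : ℝ | y ∈ Icc (0:ℝ) 1 ∧
        y ≤ ∑ i ∈ Finset.univ.filter (fun i => y ≤ r i), w i} with hS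
  have hS0 : ∀ r, (0:ℝ) ∈ S r := by
    intro r
    exact ⟨⟨le_refl 0, zero_le_one⟩, Finset.sum_nonneg fun i _ => hw i⟩
  have hbdd : ∀ r, BddAbove (S r) := fun r => ⟨1, fun y hy => hy.1.2⟩
  have hμ0 : ∀ r, 0 ≤ μ r := by
    intro r; rw [hμ r]; exact le_csSup (hbdd r) (hS0 r)
  constructor
  · intro i r r' hr hr' hdiff
    constructor
    · -- r i < μ r → μ r ≤ μ r'
      intro hlt
      have key : ∀ y ∈ S r, r i < y → y ∈ S r' := by
        intro y hy hyi
        refine ⟨hy.1, hy.2.trans (Finset.sum_le_sum_of_subset_of_nonneg ?_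
          fun j _ _ => hw j)⟩
        intro j hj
        simp only [Finset.mem_filter, Finset.mem_univ, true_and] at hj ⊢
        by_cases hji : j = i
        · exact absurd (hji ▸ hj) (not_le.mpr hyi)
        · rw [hdiff j hji]; exact hj
      rw [hμ r']
      refine le_of_forall_lt fun c hc => ?_
      have hmax : max c (r i) < μ r := max_lt hc hlt
      rw [hμ r] at hmax
      obtain ⟨y, hyS, hy⟩ := exists_lt_of_lt_csSup ⟨0, hS0 r⟩ hmax
      exact lt_of_le_of_lt (le_max_left _ _)
        (hy.trans_le (le_csSup (hbdd r') (key y hyS ((le_max_right _ _).trans_lt hy))))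
    · -- r i > μ r → μ r ≥ μ r'
      intro hgt
      rw [ge_iff_le, hμ r']
      refine csSup_le ⟨0, hS0 r'⟩ fun y hy => ?_
      by_contra hcon
      push_neg at hcon
      by_cases hyi : y ≤ r i
      · -- then S r' membership transfers to S r
        have : y ∈ S r := by
          refine ⟨hy.1, hy.2.trans (Finset.sum_le_sum_of_subset_of_nonneg ?_
            fun j _ _ => hw j)⟩
          intro j hj
          simp only [Finset.mem_filter, Finset.mem_univ, true_and] at hj ⊢
          by_cases hji : j = i
          · exact hji ▸ hyi
          · rw [← hdiff j hji]; exact hj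
        have := le_csSup (hbdd r) this
        rw [← hμ r] at this
        exact absurd this (not_le.mpr hcon)
      · push_neg at hyi
        have hz : r i ∈ S r := by
          refine ⟨hr i, le_trans (le_of_lt (hyi.trans_le hy.2))
            (Finset.sum_le_sum_of_subset_of_nonneg ?_ fun j _ _ => hw j)⟩
          intro j hj
          simp only [Finset.mem_filter, Finset.mem_univ, true_and] at hj ⊢
          by_cases hji : j = i
          · exact hji ▸ le_refl _
          · rw [hdiff j hji] at hj; exact (hyi.le.trans hj)
        have := le_csSup (hbdd r) hz
        rw [← hμ r] at this
        exact absurd this (not_le.mpr hgt)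
  · intro x hx
    rw [hμ]
    apply le_antisymm
    · refine csSup_le ⟨0, hS0 _⟩ fun y hy => ?_
      by_contra hcon
      push_neg at hcon
      have : Finset.univ.filter (fun _ : Fin n => y ≤ x) = ∅ := by
        apply Finset.filter_false_of_mem
        intro j _
        exact not_le.mpr hcon
      obtain ⟨hy1, hy2⟩ := hy
      rw [this, Finset.sum_empty] at hy2
      exact absurd (hy2.trans_lt (hx.1.trans_lt hcon)) (lt_irrefl y)
    · apply le_csSup (hbdd _)
      refine ⟨hx, ?_⟩
      have : Finset.univ.filter (fun _ : Fin n => x ≤ x) = Finset.univ := by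
        simp
      rw [this, hsum]
      exact hx.2
end

section
/- If all weights are rational, w_i = s_i/d with s_i, d positive integers and Σ_i s_i = d, then μ_w(r_1,…,r_n) = median(r_1 repeated s_1 times, …, r_n repeated s_n times, 0, 1/d, 2/d, …, (d−1)/d, 1), a median over a multiset of 2d+1 values. -/
open Set Finset

private lemma my_countP_bind {α β : Type*} (p : β → Prop) [DecidablePred p]
    (m : Multiset α) (f : α → Multiset β) :
    Multiset.countP p (m.bind f) = (m.map fun a => Multiset.countP p (f a)).sum := by
  induction m using Multiset.induction_on with
  | empty => simp
  | cons a t ih => simp [Multiset.cons_bind, Multiset.countP_add, ih]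

private lemma my_countP_replicate {α : Type*} (p : α → Prop) [DecidablePred p] (n : ℕ) (a : α) :
    Multiset.countP p (Multiset.replicate n a) = if p a then n else 0 := by
  induction n with
  | zero => simp
  | succ n ih =>
    rw [Multiset.replicate_succ, Multiset.countP_cons, ih]
    split <;> simp

/-- With rational weights `w i = s i / d` (`Σ s i = d`), the weighted uniform-median
rule `μ_w(r) = sup { y ∈ [0,1] : Σ_{i : r_i ≥ y} w_i ≥ y }` equals the median (the
`(d+1)`-st smallest element) of the multiset of `2d+1` values consisting of each `r i`
repeated `s i` times together with the phantoms `0, 1/d, …, (d−1)/d, 1`. -/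
theorem weighted_uniform_median_rational_weights_median_formula
    (n d : ℕ) (hd : 0 < d) (s : Fin n → ℕ) (hs : ∀ i, 0 < s i)
    (hsum : ∑ i, s i = d)
    (w : Fin n → ℝ) (hw : ∀ i, w i = (s i : ℝ) / d)
    (r : Fin n → ℝ) (hr : ∀ i, r i ∈ Icc (0:ℝ) 1) :
    sSup {y : ℝ | y ∈ Icc (0:ℝ) 1 ∧
        y ≤ ∑ i ∈ Finset.univ.filter (fun i => y ≤ r i), w i}
      = ((((Finset.univ : Finset (Fin n)).val.bind
              (fun i => Multiset.replicate (s i) (r i))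
            + (Multiset.range (d+1)).map (fun k => (k : ℝ) / d)).sort (· ≤ ·))[d]!) := by
  have hdpos : (0:ℝ) < d := Nat.cast_pos.mpr hd
  have hph : (Multiset.range (d+1)).map (fun k => (k : ℝ) / d)
      = Multiset.map (fun k : ℕ => (k:ℝ)/(d:ℝ)) (Multiset.range (d+1)) := by
    show Multiset.map _ ((Multiset.range (d+1)).bind (fun a => {((a:ℕ):ℝ)})) = _
    rw [Multiset.bind_singleton, Multiset.map_map]
    rfl
  rw [hph]
  set M : Multiset ℝ := (Finset.univ : Finset (Fin n)).val.bind
      (fun i => Multiset.replicate (s i) (r i))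
      + Multiset.map (fun k : ℕ => (k:ℝ)/(d:ℝ)) (Multiset.range (d+1)) with hM
  set L : List ℝ := M.sort (· ≤ ·) with hLdef
  have hLM : (↑L : Multiset ℝ) = M := Multiset.sort_eq _ _
  have hsort : L.Pairwise (· ≤ ·) := Multiset.pairwise_sort _ _
  have hcard : Multiset.card M = 2*d+1 := by
    rw [hM, Multiset.card_add, Multiset.card_bind, Multiset.card_map, Multiset.card_range]
    have : (Multiset.map (Multiset.card ∘ fun i => Multiset.replicate (s i) (r i))
        (Finset.univ : Finset (Fin n)).val).sum
        = ∑ i, Multiset.card (Multiset.replicate (s i) (r i)) := rfl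
    rw [this]
    simp only [Multiset.card_replicate]
    omega
  have hlen : L.length = 2*d+1 := by rw [hLdef, Multiset.length_sort, hcard]
  have hd_lt : d < L.length := by omega
  have hmono : ∀ (j i : ℕ) (hj : j ≤ i) (hi : i < L.length), L[j]'(by omega) ≤ L[i]'hi := by
    intro j i hj hi
    have := hsort.rel_get_of_le (show (⟨j, by omega⟩ : Fin L.length) ≤ ⟨i, hi⟩ from hj)
    simpa using this
  set m : ℝ := L[d]'hd_lt with hm
  -- counting lemmas
  have hcr : ∀ y : ℝ,
      Multiset.countP (fun x => y ≤ x)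
        ((Finset.univ : Finset (Fin n)).val.bind (fun i => Multiset.replicate (s i) (r i)))
      = ∑ i ∈ Finset.univ.filter (fun i => y ≤ r i), s i := by
    intro y
    rw [my_countP_bind]
    rw [show (Multiset.map (fun i => Multiset.countP (fun x => y ≤ x)
        (Multiset.replicate (s i) (r i))) (Finset.univ : Finset (Fin n)).val).sum
        = ∑ i, Multiset.countP (fun x => y ≤ x) (Multiset.replicate (s i) (r i)) from rfl]
    rw [Finset.sum_filter]
    exact Finset.sum_congr rfl fun i _ => my_countP_replicate _ _ _
  have hceil_le : ∀ y : ℝ, y ≤ 1 → ⌈(d:ℝ)*y⌉₊ ≤ d := by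
    intro y hy1
    apply Nat.ceil_le.mpr
    nlinarith
  have hcp : ∀ y : ℝ, 0 ≤ y → y ≤ 1 →
      Multiset.countP (fun x => y ≤ x) (Multiset.map (fun k : ℕ => (k:ℝ)/(d:ℝ)) (Multiset.range (d+1)))
      = (d+1) - ⌈(d:ℝ)*y⌉₊ := by
    intro y hy0 hy1
    rw [Multiset.countP_map]
    have hiff : ∀ k ∈ Multiset.range (d+1), (y ≤ (k:ℝ)/d) ↔ (⌈(d:ℝ)*y⌉₊ ≤ k) := by
      intro k _
      rw [le_div_iff₀ hdpos, mul_comm, Nat.ceil_le]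
    rw [Multiset.filter_congr hiff]
    have h1 : Multiset.filter (fun k => ⌈(d:ℝ)*y⌉₊ ≤ k) (Multiset.range (d+1))
        = ((Finset.range (d+1)).filter (fun k => ⌈(d:ℝ)*y⌉₊ ≤ k)).val := rfl
    rw [h1]
    have h2 : (Finset.range (d+1)).filter (fun k => ⌈(d:ℝ)*y⌉₊ ≤ k)
        = Finset.Ico (⌈(d:ℝ)*y⌉₊) (d+1) := by
      ext k
      simp only [Finset.mem_filter, Finset.mem_range, Finset.mem_Ico]
      omega
    rw [h2]
    have := Nat.card_Ico (⌈(d:ℝ)*y⌉₊) (d+1)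
    simpa using this
  have hcnt : ∀ y : ℝ, 0 ≤ y → y ≤ 1 →
      Multiset.countP (fun x => y ≤ x) M
      = (∑ i ∈ Finset.univ.filter (fun i => y ≤ r i), s i) + ((d+1) - ⌈(d:ℝ)*y⌉₊) := by
    intro y hy0 hy1
    rw [hM, Multiset.countP_add, hcr, hcp y hy0 hy1]
  -- relating the weight-sum condition to a counting condition
  have hsumw : ∀ y : ℝ, ∑ i ∈ Finset.univ.filter (fun i => y ≤ r i), w i
      = ((∑ i ∈ Finset.univ.filter (fun i => y ≤ r i), s i : ℕ) : ℝ) / d := by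
    intro y
    rw [Nat.cast_sum, Finset.sum_div]
    exact Finset.sum_congr rfl fun i _ => hw i
  have hFiff : ∀ y : ℝ,
      (y ≤ ∑ i ∈ Finset.univ.filter (fun i => y ≤ r i), w i)
      ↔ (⌈(d:ℝ)*y⌉₊ ≤ ∑ i ∈ Finset.univ.filter (fun i => y ≤ r i), s i) := by
    intro y
    rw [hsumw, le_div_iff₀ hdpos, mul_comm, Nat.ceil_le]
  -- countP over the sorted list
  have hcntL : ∀ y : ℝ, Multiset.countP (fun x => y ≤ x) M
      = L.countP (fun x => decide (y ≤ x)) := by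
    intro y
    rw [← hLM, Multiset.coe_countP]
  -- m ∈ [0,1]
  have hmem : m ∈ M := by
    rw [← hLM]
    exact Multiset.mem_coe.mpr (List.getElem_mem hd_lt)
  have hm01 : m ∈ Icc (0:ℝ) 1 := by
    rw [hM] at hmem
    rcases Multiset.mem_add.mp hmem with h | h
    · rcases Multiset.mem_bind.mp h with ⟨i, _, hmi⟩
      rw [Multiset.eq_of_mem_replicate hmi]
      exact hr i
    · rcases Multiset.mem_map.mp h with ⟨k, hk, hkm⟩
      have hkd : k ≤ d := by
        have := Multiset.mem_range.mp hk
        omega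
      constructor
      · rw [← hkm]; positivity
      · rw [← hkm, div_le_one hdpos]
        exact_mod_cast hkd
  -- count at m is at least d+1
  have hcount_m : d + 1 ≤ Multiset.countP (fun x => m ≤ x) M := by
    rw [hcntL]
    have hsplit : L.countP (fun x => decide (m ≤ x))
        = (L.take d).countP (fun x => decide (m ≤ x))
          + (L.drop d).countP (fun x => decide (m ≤ x)) := by
      rw [← List.countP_append, List.take_append_drop]
    have hall : (L.drop d).countP (fun x => decide (m ≤ x)) = (L.drop d).length := by
      apply List.countP_eq_length.mpr
      intro a ha
      rcases List.mem_iff_getElem.mp ha with ⟨j, hj, rfl⟩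
      simp only [decide_eq_true_eq]
      rw [List.getElem_drop]
      exact hmono d (d + j) (by omega) (by rw [List.length_drop] at hj; omega)
    have hldrop : (L.drop d).length = d + 1 := by rw [List.length_drop]; omega
    omega
  -- if y > m then count at y is at most d
  have hcount_gt : ∀ y : ℝ, m < y → Multiset.countP (fun x => y ≤ x) M ≤ d := by
    intro y hy
    rw [hcntL]
    have hsplit : L.countP (fun x => decide (y ≤ x))
        = (L.take (d+1)).countP (fun x => decide (y ≤ x))
          + (L.drop (d+1)).countP (fun x => decide (y ≤ x)) := by
      rw [← List.countP_append, List.take_append_drop]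
    have hzero : (L.take (d+1)).countP (fun x => decide (y ≤ x)) = 0 := by
      apply List.countP_eq_zero.mpr
      intro a ha
      rcases List.mem_iff_getElem.mp ha with ⟨j, hj, rfl⟩
      simp only [decide_eq_true_eq, not_le]
      rw [List.getElem_take]
      have hj' : j ≤ d := by
        rw [List.length_take] at hj
        omega
      exact lt_of_le_of_lt (hmono j d hj' hd_lt) hy
    have hle : (L.drop (d+1)).countP (fun x => decide (y ≤ x)) ≤ (L.drop (d+1)).length :=
      List.countP_le_length
    have hldrop : (L.drop (d+1)).length = d := by rw [List.length_drop]; omega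
    omega
  -- the median is the greatest element of the set
  have hgreat : IsGreatest {y : ℝ | y ∈ Icc (0:ℝ) 1 ∧
      y ≤ ∑ i ∈ Finset.univ.filter (fun i => y ≤ r i), w i} m := by
    constructor
    · refine ⟨hm01, (hFiff m).mpr ?_⟩
      have h1 := hcnt m hm01.1 hm01.2
      have h2 := hceil_le m hm01.2
      omega
    · intro y hy
      obtain ⟨⟨hy0, hy1⟩, hyF⟩ := hy
      by_contra hlt
      push_neg at hlt
      have h1 := hcnt y hy0 hy1
      have h2 := hceil_le y hy1
      have h3 := (hFiff y).mp hyF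
      have h4 := hcount_gt y hlt
      omega
  rw [hgreat.csSup_eq]
  rw [getElem!_pos L d hd_lt]
end

section
/- When all weights equal 1/n, the uniform median satisfies proportionality on Dirac inputs: for any a_1,…,a_n ∈ Λ, the aggregate obtained by applying g(r) = median(r_1,…,r_n, 1/n, 2/n, …, (n−1)/n) pointwise to the CDFs of the Dirac measures δ_{a_1},…,δ_{a_n} is the CDF of the uniform average (1/n) Σ_i δ_{a_i}. Concretely, for every a ∈ Λ: median(𝟙[a_1 ≤ a],…,𝟙[a_n ≤ a], 1/n,…,(n−1)/n) = #{ i : a_i ≤ a }/n. -/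
open Set Finset

/-- Proportionality of the uniform median on Dirac inputs: for Dirac measures
`δ_{a_1},…,δ_{a_n}`, applying the rule
`g(r) = median(r_1,…,r_n, 1/n,…,(n−1)/n)` (the `n`-th smallest of the `2n−1` values)
pointwise to their CDFs (the indicators `𝟙[a_i ≤ a]`) yields the CDF of the uniform
average `(1/n) Σ_i δ_{a_i}`, namely `#{i : a_i ≤ a}/n`. -/
theorem uniform_median_dirac_proportionality
    (n : ℕ) (hn : 0 < n) (as : Fin n → ℝ) (a : ℝ) :
    ((((Finset.univ : Finset (Fin n)).val.map
          (fun i => if as i ≤ a then (1:ℝ) else 0)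
        + (Multiset.range (n-1)).map (fun k => ((k+1 : ℕ) : ℝ) / n)).sort (· ≤ ·))[n-1]!)
      = ((Finset.univ.filter (fun i => as i ≤ a)).card : ℝ) / n := by
  set m := (Finset.univ.filter (fun i => as i ≤ a)).card with hm
  have hmn : m ≤ n := le_trans (Finset.card_filter_le _ _) (by simp)
  set g : ℕ → ℝ := fun k => ((k+1 : ℕ) : ℝ) / n with hg
  set L : List ℝ := List.replicate (n - m) 0 ++ ((List.range (n-1)).map g ++ List.replicate m 1) with hL
  have hgpos : ∀ k, (0:ℝ) ≤ g k := fun k => by positivity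
  have hgle : ∀ k, k < n - 1 → g k ≤ 1 := by
    intro k hk
    rw [hg, div_le_one (by exact_mod_cast hn)]
    exact_mod_cast (by omega : k + 1 ≤ n)
  have hsorted : L.Pairwise (· ≤ ·) := by
    rw [hL]
    rw [List.pairwise_append, List.pairwise_append]
    refine ⟨List.pairwise_replicate.2 (Or.inr le_rfl), ⟨?_, ?_, ?_⟩, ?_⟩
    · refine (List.pairwise_lt_range (n := _)).map g ?_
      intro x y hxy
      rw [hg]
      have h1 : ((x+1:ℕ):ℝ) ≤ ((y+1:ℕ):ℝ) := by exact_mod_cast Nat.succ_le_succ hxy.le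
      exact div_le_div_of_nonneg_right h1 (Nat.cast_nonneg n)
    · exact List.pairwise_replicate.2 (Or.inr le_rfl)
    · intro x hx y hy
      rw [List.mem_map] at hx
      obtain ⟨k, hk, rfl⟩ := hx
      rw [List.eq_of_mem_replicate hy]
      exact hgle k (List.mem_range.1 hk)
    · intro x hx y hy
      rw [List.eq_of_mem_replicate hx]
      rcases List.mem_append.1 hy with hy | hy
      · rw [List.mem_map] at hy
        obtain ⟨k, hk, rfl⟩ := hy
        exact hgpos k
      · rw [List.eq_of_mem_replicate hy]; norm_num
  have hA : Multiset.map (fun i => if as i ≤ a then (1:ℝ) else 0)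
      (Multiset.filter (fun i => as i ≤ a) (Finset.univ : Finset (Fin n)).val)
      = Multiset.replicate m 1 := by
    rw [Multiset.map_congr rfl (fun x hx => if_pos (Multiset.of_mem_filter hx)),
      Multiset.map_const']
    congr 1
  have hcardB : Multiset.card
      (Multiset.filter (fun i => ¬ as i ≤ a) (Finset.univ : Finset (Fin n)).val) = n - m := by
    have htot : Multiset.card (Multiset.filter (fun i => as i ≤ a) (Finset.univ : Finset (Fin n)).val)
        + Multiset.card (Multiset.filter (fun i => ¬ as i ≤ a) (Finset.univ : Finset (Fin n)).val)
        = n := by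
      rw [← Multiset.card_add, Multiset.filter_add_not]
      simp
    have hmc : Multiset.card (Multiset.filter (fun i => as i ≤ a) (Finset.univ : Finset (Fin n)).val) = m := rfl
    omega
  have hB : Multiset.map (fun i => if as i ≤ a then (1:ℝ) else 0)
      (Multiset.filter (fun i => ¬ as i ≤ a) (Finset.univ : Finset (Fin n)).val)
      = Multiset.replicate (n - m) 0 := by
    have hfun : ∀ x ∈ Multiset.filter (fun i => ¬ as i ≤ a) (Finset.univ : Finset (Fin n)).val,
        (if as x ≤ a then (1:ℝ) else 0) = (0:ℝ) := by
      intro x hx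
      exact if_neg (Multiset.of_mem_filter (p := fun i => ¬ as i ≤ a) hx)
    rw [Multiset.map_congr rfl hfun, Multiset.map_const', hcardB]
  have h1 : (Finset.univ : Finset (Fin n)).val.map (fun i => if as i ≤ a then (1:ℝ) else 0)
      = Multiset.replicate m 1 + Multiset.replicate (n - m) 0 := by
    conv_lhs => rw [← Multiset.filter_add_not (fun i => as i ≤ a) (Finset.univ : Finset (Fin n)).val]
    rw [Multiset.map_add, hA, hB]
  have hperm : (↑L : Multiset ℝ) =
      (Finset.univ : Finset (Fin n)).val.map (fun i => if as i ≤ a then (1:ℝ) else 0)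
        + (Multiset.range (n-1)).map g := by
    rw [h1]
    have hr : (Multiset.range (n-1)).map g = ((List.range (n-1)).map g : List ℝ) := by
      rw [show (Multiset.range (n-1)) = ((List.range (n-1) : List ℕ) : Multiset ℕ) from rfl,
        Multiset.map_coe]
    rw [hr, hL]
    simp only [← Multiset.coe_add, Multiset.coe_replicate]
    abel
  have hsort : (((Finset.univ : Finset (Fin n)).val.map
          (fun i => if as i ≤ a then (1:ℝ) else 0)
        + (Multiset.range (n-1)).map g).sort (· ≤ ·)) = L := by
    apply List.Perm.eq_of_pairwise' (Multiset.pairwise_sort _ _) hsorted ?_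
    rw [← Multiset.coe_eq_coe, Multiset.sort_eq, hperm]
  rw [hsort]
  have hlen : L.length = (n - m) + ((n-1) + m) := by simp [hL]
  have hlt : n - 1 < L.length := by omega
  rw [getElem!_pos L (n-1) hlt, List.getElem_of_eq hL]
  rcases Nat.eq_zero_or_pos m with hm0 | hm1
  · have h1 : n - 1 < (List.replicate (n - m) (0:ℝ)).length := by simp; omega
    rw [List.getElem_append_left h1, List.getElem_replicate, hm0]
    simp
  · have h1 : (List.replicate (n - m) (0:ℝ)).length ≤ n - 1 := by simp; omega
    rw [List.getElem_append_right h1]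
    simp only [List.length_replicate]
    rcases Nat.lt_or_ge m n with hmlt | hge
    · have h2 : n - 1 - (n - m) < ((List.range (n-1)).map g).length := by simp; omega
      rw [List.getElem_append_left h2, List.getElem_map, List.getElem_range, hg]
      show ((n - 1 - (n - m) + 1 : ℕ) : ℝ) / n = (m:ℝ) / n
      have he : n - 1 - (n - m) + 1 = m := by omega
      rw [he]
    · have hmeq : m = n := le_antisymm hmn hge
      have h2 : ((List.range (n-1)).map g).length ≤ n - 1 - (n - m) := by simp; omega
      rw [List.getElem_append_right h2, List.getElem_replicate, hmeq,
        div_self (by exact_mod_cast hn.ne' : (n:ℝ) ≠ 0)]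
end

section
/- Partial strategyproofness in ranking for Level-SP aggregation: suppose the per-candidate aggregate CDF at each grade a is G(a) = g(P_1(a),…,P_n(a)) for an uncompromising rule g. Let m(X) = min{ a : G^X(a) ≥ 1/2 } be society's majority grade of candidate X ∈ {A,B}, and m_i(X) the analogous majority grade of voter i's input CDF P_i^X. If m(A) > m(B) and m_i(B) ≥ m_i(A), then: if voter i can, by deviating, strictly increase m(B), then i cannot strictly decrease m(A); and if i can strictly decrease m(A), then i cannot strictly increase m(B). -/
open Set Finset

/-- A CDF on the finite grade scale `Fin (m+1)`. -/
def IsGradeCDF {m : ℕ} (F : Fin (m+1) → ℝ) : Prop :=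
  Monotone F ∧ (∀ a, F a ∈ Icc (0:ℝ) 1) ∧ F (Fin.last m) = 1

/-- The majority grade of a CDF `F` on the grade scale: the smallest grade `a` with
`F a ≥ 1/2` (as an element of `WithTop (Fin (m+1))`). -/
noncomputable def majGrade {m : ℕ} (F : Fin (m+1) → ℝ) : WithTop (Fin (m+1)) :=
  (Finset.univ.filter (fun a => (1:ℝ)/2 ≤ F a)).min

lemma maj_le {m : ℕ} {F : Fin (m+1) → ℝ} {a : Fin (m+1)} (h : (1:ℝ)/2 ≤ F a) :
    majGrade F ≤ (a : WithTop (Fin (m+1))) :=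
  Finset.min_le (by simp only [Finset.mem_filter, Finset.mem_univ, true_and]; exact h)

lemma lt_maj {m : ℕ} {F : Fin (m+1) → ℝ} {a : Fin (m+1)}
    (h : (a : WithTop (Fin (m+1))) < majGrade F) : F a < 1/2 := by
  by_contra hc
  exact absurd (maj_le (not_lt.1 hc)) (not_le.2 h)

lemma maj_eq {m : ℕ} {F : Fin (m+1) → ℝ} (hF : IsGradeCDF F) :
    ∃ c : Fin (m+1), majGrade F = (c : WithTop (Fin (m+1))) ∧ (1:ℝ)/2 ≤ F c := by
  have hmem : Fin.last m ∈ Finset.univ.filter (fun a => (1:ℝ)/2 ≤ F a) := by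
    simp only [Finset.mem_filter, Finset.mem_univ, true_and, hF.2.2]
    norm_num
  obtain ⟨c, hc⟩ := Finset.min_of_mem hmem
  refine ⟨c, hc, ?_⟩
  have := Finset.mem_of_min hc
  simpa only [Finset.mem_filter, Finset.mem_univ, true_and] using this

/-- Partial strategyproofness in ranking: if the per-candidate aggregate CDF is
obtained by applying an uncompromising rule `g` gradewise, society's majority grade of
`A` is strictly above that of `B`, and voter `i`'s majority grade for `B` is at least
their majority grade for `A`, then: if `i` can strictly increase society's majority
grade of `B` by deviating, they cannot strictly decrease that of `A`; and vice versa. -/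
theorem MJU_partial_strategyproofness_in_ranking
    (n m : ℕ)
    (g : (Fin n → ℝ) → ℝ)
    (hg : ∀ (i : Fin n) (r r' : Fin n → ℝ),
      (∀ j, r j ∈ Icc (0:ℝ) 1) → (∀ j, r' j ∈ Icc (0:ℝ) 1) →
      (∀ j, j ≠ i → r' j = r j) →
      (r i < g r → g r ≤ g r') ∧ (r i > g r → g r ≥ g r'))
    (hgCDF : ∀ P : Fin n → Fin (m+1) → ℝ, (∀ j, IsGradeCDF (P j)) →
      IsGradeCDF (fun a => g (fun j => P j a)))
    (PA PB : Fin n → Fin (m+1) → ℝ)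
    (hPA : ∀ j, IsGradeCDF (PA j)) (hPB : ∀ j, IsGradeCDF (PB j))
    (i : Fin n)
    -- society's majority grade of A is strictly above that of B
    (hmaj : majGrade (fun a => g (fun j => PB j a))
              < majGrade (fun a => g (fun j => PA j a)))
    -- voter i's majority grade for B is at least their majority grade for A
    (hmi : majGrade (PA i) ≤ majGrade (PB i)) :
    ((∃ Q : Fin (m+1) → ℝ, IsGradeCDF Q ∧
        majGrade (fun a => g (fun j => PB j a))
          < majGrade (fun a => g (fun j => if j = i then Q a else PB j a))) →
      ¬ (∃ Q : Fin (m+1) → ℝ, IsGradeCDF Q ∧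
        majGrade (fun a => g (fun j => if j = i then Q a else PA j a))
          < majGrade (fun a => g (fun j => PA j a)))) ∧
    ((∃ Q : Fin (m+1) → ℝ, IsGradeCDF Q ∧
        majGrade (fun a => g (fun j => if j = i then Q a else PA j a))
          < majGrade (fun a => g (fun j => PA j a))) →
      ¬ (∃ Q : Fin (m+1) → ℝ, IsGradeCDF Q ∧
        majGrade (fun a => g (fun j => PB j a))
          < majGrade (fun a => g (fun j => if j = i then Q a else PB j a)))) := by
  suffices H : ¬ ((∃ Q : Fin (m+1) → ℝ, IsGradeCDF Q ∧
        majGrade (fun a => g (fun j => PB j a))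
          < majGrade (fun a => g (fun j => if j = i then Q a else PB j a))) ∧
      (∃ Q : Fin (m+1) → ℝ, IsGradeCDF Q ∧
        majGrade (fun a => g (fun j => if j = i then Q a else PA j a))
          < majGrade (fun a => g (fun j => PA j a)))) by
    exact ⟨fun h1 h2 => H ⟨h1, h2⟩, fun h2 h1 => H ⟨h1, h2⟩⟩
  rintro ⟨⟨QB, hQB, hB⟩, ⟨QA, hQA, hA⟩⟩
  have hGB := hgCDF PB hPB
  have hGA := hgCDF PA hPA
  obtain ⟨bB, hbBeq, hbBhalf⟩ := maj_eq hGB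
  obtain ⟨bA, hbAeq, hbAhalf⟩ := maj_eq hGA
  have hBA : bB < bA := by
    rw [hbBeq, hbAeq] at hmaj
    exact_mod_cast hmaj
  by_cases hcase : majGrade (PB i) ≤ (bB : WithTop (Fin (m+1)))
  · -- voter i's maj for B is ≤ society's: then i's maj for A is < m(A); can't lower A
    have hPAi : majGrade (PA i) ≤ (bB : WithTop (Fin (m+1))) := le_trans hmi hcase
    obtain ⟨cA, hcAeq, hcAhalf⟩ := maj_eq (hPA i)
    have hcAle : cA ≤ bB := by rw [hcAeq] at hPAi; exact_mod_cast hPAi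
    have hG' : IsGradeCDF (fun a => g (fun j => if j = i then QA a else PA j a)) := by
      have := hgCDF (fun j a => if j = i then QA a else PA j a) (fun j => by
        by_cases hj : j = i
        · simpa [hj] using hQA
        · simpa [hj] using hPA j)
      simpa only [Finset.mem_filter, Finset.mem_univ, true_and] using this
    obtain ⟨b', hb'eq, hb'half⟩ := maj_eq hG'
    have hb'lt : b' < bA := by
      rw [hb'eq, hbAeq] at hA
      exact_mod_cast hA
    have hbApos : 0 < bA.val := lt_of_le_of_lt (Nat.zero_le _) hBA
    set b : Fin (m+1) := ⟨bA.val - 1, lt_of_le_of_lt (Nat.sub_le _ _) bA.isLt⟩ with hbdef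
    have hblt : b < bA := by
      show bA.val - 1 < bA.val
      exact Nat.sub_lt hbApos one_pos
    have hb'le : b' ≤ b := Nat.le_pred_of_lt hb'lt
    have hcAleb : cA ≤ b := Nat.le_pred_of_lt (lt_of_le_of_lt hcAle hBA)
    have h3 : (1:ℝ)/2 ≤ PA i b := le_trans hcAhalf ((hPA i).1 hcAleb)
    have h4 : g (fun j => PA j b) < 1/2 := lt_maj (F := fun a => g (fun j => PA j a)) (by
      rw [hbAeq]; exact_mod_cast hblt)
    have h5 : (1:ℝ)/2 ≤ g (fun j => if j = i then QA b else PA j b) :=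
      le_trans hb'half (hG'.1 hb'le)
    have hunc := (hg i (fun j => PA j b) (fun j => if j = i then QA b else PA j b)
      (fun j => (hPA j).2.1 b)
      (fun j => by by_cases hj : j = i <;> simp [hj, (hPA j).2.1 b, hQA.2.1 b])
      (fun j hj => if_neg hj)).2
    have := hunc (lt_of_lt_of_le h4 h3)
    linarith
  · -- voter i's maj for B is above society's: can't raise B
    push_neg at hcase
    have h1 : PB i bB < 1/2 := lt_maj hcase
    have h2 : (1:ℝ)/2 ≤ g (fun j => PB j bB) := hbBhalf
    have hunc := (hg i (fun j => PB j bB) (fun j => if j = i then QB bB else PB j bB)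
      (fun j => (hPB j).2.1 bB)
      (fun j => by by_cases hj : j = i <;> simp [hj, (hPB j).2.1 bB, hQB.2.1 bB])
      (fun j hj => if_neg hj)).1
    have hle := hunc (lt_of_lt_of_le h1 h2)
    have : majGrade (fun a => g (fun j => if j = i then QB a else PB j a))
        ≤ (bB : WithTop (Fin (m+1))) := maj_le (le_trans h2 hle)
    rw [← hbBeq] at this
    exact absurd hB (not_lt.2 this)
end
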